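/- arXiv:1707.01325 — 4 statements merged into one kernel-verified Lean document; each statement's English description precedes it below -/
import Mathlib

section
/- Let d ≥ 1, s > d/2, and let 0 < α ≤ 2 with α < 2s−d. Then there exists a constant C = C(d,s,α) > 0 such that for every m > 1, every real J with m^J ≥ d, and every u ∈ ℝ^d: ∑_{j∈ℤ^d, ‖j‖₂ ≥ m^J} ∫_{[0,2π)^d} (1+‖ξ+2πj‖₂²)^{-s} |1 − e^{i u·(ξ+2πj)}|² dξ ≤ C ‖u‖₂^α m^{-J(2s−α−d)}. -/
open MeasureTheory Real Filter Matrix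
open scoped BigOperators

noncomputable section

abbrev Rd (d : ℕ) := EuclideanSpace ℝ (Fin d)

/-- The Euclidean inner product `x·y` on `ℝ^d`. -/
def dotp {d : ℕ} (x y : Rd d) : ℝ := inner ℝ x y

/-- Embed a lattice point `k ∈ ℤ^d` into `ℝ^d`. -/
def latt (d : ℕ) (k : Fin d → ℤ) : Rd d := WithLp.toLp 2 (fun i => (k i : ℝ))

/-- The real matrix associated with an integer matrix. -/
def toR {d : ℕ} (M : Matrix (Fin d) (Fin d) ℤ) : Matrix (Fin d) (Fin d) ℝ :=
  M.map fun a => (a : ℝ)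

/-- A matrix acting on `ℝ^d`. -/
def mvec {d : ℕ} (A : Matrix (Fin d) (Fin d) ℝ) (x : Rd d) : Rd d :=
  WithLp.toLp 2 (fun i => A.mulVec (fun j => x j) i)

/-- The Fourier transform `f̂(ξ) = ∫ f(x) e^{-i x·ξ} dx`. -/
def FT {d : ℕ} (f : Rd d → ℂ) (ξ : Rd d) : ℂ :=
  ∫ x : Rd d, f x * Complex.exp (-Complex.I * (dotp x ξ : ℂ))

/-- The squared `H^s`-norm, expressed via the Fourier transform. -/
def sobSq {d : ℕ} (s : ℝ) (fh : Rd d → ℂ) : ℝ :=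
  (2 * π) ^ (-(d : ℝ)) * ∫ ξ : Rd d, ‖fh ξ‖ ^ 2 * (1 + ‖ξ‖ ^ 2) ^ s

/-- The `H^s`-norm, expressed via the Fourier transform. -/
def sobNorm {d : ℕ} (s : ℝ) (fh : Rd d → ℂ) : ℝ := Real.sqrt (sobSq s fh)

/-- Membership in `H^s`, expressed via the Fourier transform. -/
def MemSob {d : ℕ} (s : ℝ) (fh : Rd d → ℂ) : Prop :=
  Integrable (fun ξ : Rd d => ‖fh ξ‖ ^ 2 * (1 + ‖ξ‖ ^ 2) ^ s)

/-- The weighted pairing `⟨f,g⟩_{H^s}`, expressed via Fourier transforms. -/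
def pairS {d : ℕ} (s : ℝ) (fh gh : Rd d → ℂ) : ℂ :=
  (((2 * π) ^ (-(d : ℝ)) : ℝ) : ℂ) *
    ∫ ξ : Rd d, fh ξ * (starRingEnd ℂ) (gh ξ) * (((1 + ‖ξ‖ ^ 2) ^ s : ℝ) : ℂ)

/-- The duality pairing `⟨f,g⟩ = (2π)^{-d} ∫ f̂ conj(ĝ)`. -/
def pair0 {d : ℕ} (fh gh : Rd d → ℂ) : ℂ := pairS 0 fh gh

/-- The bracket product `[ĝ,ĝ]_t(ξ) = ∑_k |ĝ(ξ+2kπ)|² (1+‖ξ+2kπ‖²)^t`. -/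
def bracket {d : ℕ} (t : ℝ) (gh : Rd d → ℂ) (ξ : Rd d) : ℝ :=
  ∑' k : Fin d → ℤ, ‖gh (ξ + (2 * π) • latt d k)‖ ^ 2 *
    (1 + ‖ξ + (2 * π) • latt d k‖ ^ 2) ^ t

/-- `a` is a `2πℤ^d`-periodic trigonometric polynomial. -/
def IsTrigPoly {d : ℕ} (a : Rd d → ℂ) : Prop :=
  ∃ (F : Finset (Fin d → ℤ)) (c : (Fin d → ℤ) → ℂ),
    ∀ ξ : Rd d, a ξ = ∑ k ∈ F, c k * Complex.exp (Complex.I * (dotp (latt d k) ξ : ℂ))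

/-- The `ℓ^α`-norm of an `ℝ^d`-valued sequence. -/
def lpN {d : ℕ} (α : ℝ) (θ : (Fin d → ℤ) → Rd d) : ℝ :=
  (∑' k : Fin d → ℤ, ‖θ k‖ ^ α) ^ (1 / α)

/-- `‖θ‖_m := max{‖θ‖_{ℓ²}, ‖θ‖_{ℓ^α}^{α/2}}`. -/
def thetaM {d : ℕ} (α : ℝ) (θ : (Fin d → ℤ) → Rd d) : ℝ :=
  max (lpN 2 θ) (lpN α θ ^ (α / 2))

/-- The `L²(ℝ^d)`-norm. -/
def L2N {d : ℕ} (f : Rd d → ℂ) : ℝ := Real.sqrt (∫ x : Rd d, ‖f x‖ ^ 2)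

/-- The coefficient `⟨f, m^{N(d/2+s)} φ̃(M^N·-k-v)⟩`, expressed on the Fourier side. -/
def sampC {d : ℕ} (M : Matrix (Fin d) (Fin d) ℤ) (m s : ℝ) (φth fh : Rd d → ℂ)
    (N : ℕ) (k : Fin d → ℤ) (v : Rd d) : ℂ :=
  (((2 * π) ^ (-(d : ℝ)) * m ^ ((N : ℝ) * (s - (d : ℝ) / 2)) : ℝ) : ℂ) *
    ∫ ξ : Rd d, fh ξ * (starRingEnd ℂ) (φth (mvec ((((toR M)ᵀ)⁻¹) ^ N) ξ)) *
      Complex.exp (Complex.I * (dotp (mvec ((toR M)⁻¹ ^ N) (latt d k + v)) ξ : ℂ))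

/-- The (shift-perturbed) sampling approximation operator
`S^N_{φ,ε} f = ∑_k ⟨f, m^{N(d/2+s)} φ̃(M^N·-k-ε_k)⟩ φ^s_{N,k}`. -/
def SNp {d : ℕ} (M : Matrix (Fin d) (Fin d) ℤ) (m s : ℝ) (φ φth : Rd d → ℂ)
    (N : ℕ) (ε : (Fin d → ℤ) → Rd d) (f : Rd d → ℂ) : Rd d → ℂ :=
  fun x => ∑' k : Fin d → ℤ,
    sampC M m s φth (FT f) N k (ε k) *
      (((m ^ ((N : ℝ) * ((d : ℝ) / 2 - s)) : ℝ) : ℂ) * φ (mvec ((toR M) ^ N) x - latt d k))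

end

noncomputable section

/-- The cube `[0,2π)^d`. -/
def cube (d : ℕ) : Set (Rd d) := {ξ | ∀ i, 0 ≤ ξ i ∧ ξ i < 2 * π}

/-- Fourier transform of the translate `g(·−v)`:  `ξ ↦ e^{-i v·ξ} ĝ(ξ)`. -/
def translF {d : ℕ} (v : Rd d) (g : Rd d → ℂ) : Rd d → ℂ :=
  fun ξ => Complex.exp (-Complex.I * (dotp v ξ : ℂ)) * g ξ

/-- The Fourier transform of the wavelet with mask symbol `b`:
`ψ̂(ξ) = b̂((Mᵀ)⁻¹ξ) φ̂((Mᵀ)⁻¹ξ)`. -/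
def waveF {d : ℕ} (M : Matrix (Fin d) (Fin d) ℤ) (b φh : Rd d → ℂ) : Rd d → ℂ :=
  fun ξ => b (mvec (((toR M)ᵀ)⁻¹) ξ) * φh (mvec (((toR M)ᵀ)⁻¹) ξ)

/-- The Fourier transform of the normalized dilate-translate `m^{j(d-c)} g(M^j·-k)`:
`ξ ↦ m^{-jc} e^{-i (M^{-j}k)·ξ} ĝ((Mᵀ)^{-j}ξ)`. -/
def dilF {d : ℕ} (M : Matrix (Fin d) (Fin d) ℤ) (m c : ℝ) (g : Rd d → ℂ)
    (j : ℕ) (k : Fin d → ℤ) : Rd d → ℂ :=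
  fun ξ => ((m ^ (-((j : ℝ) * c)) : ℝ) : ℂ) *
    Complex.exp (-Complex.I * (dotp (mvec ((toR M)⁻¹ ^ j) (latt d k)) ξ : ℂ)) *
    g (mvec ((((toR M)ᵀ)⁻¹) ^ j) ξ)

/-- The coefficient `⟨f, ψ̃^{-s}_{j,k}⟩`, expressed on the Fourier side, where
`ψ̃` has mask symbol `b` over the refinable function `φ̃`. -/
def wcoef {d : ℕ} (M : Matrix (Fin d) (Fin d) ℤ) (m s : ℝ) (b φth fh : Rd d → ℂ)
    (j : ℕ) (k : Fin d → ℤ) : ℂ :=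
  (((2 * π) ^ (-(d : ℝ)) * m ^ ((j : ℝ) * (s - (d : ℝ) / 2)) : ℝ) : ℂ) *
    ∫ ξ : Rd d, fh ξ * (starRingEnd ℂ)
        (b (mvec ((((toR M)ᵀ)⁻¹) ^ (j + 1)) ξ) * φth (mvec ((((toR M)ᵀ)⁻¹) ^ (j + 1)) ξ)) *
      Complex.exp (Complex.I * (dotp (mvec ((toR M)⁻¹ ^ j) (latt d k)) ξ : ℂ))

/-- The coefficient `⟨f, m^{Nd/2} φ̃(M^N·-k-v)⟩`, expressed on the Fourier side. -/
def coefD {d : ℕ} (M : Matrix (Fin d) (Fin d) ℤ) (m : ℝ) (φth fh : Rd d → ℂ)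
    (N : ℕ) (k : Fin d → ℤ) (v : Rd d) : ℂ :=
  (((2 * π) ^ (-(d : ℝ)) * m ^ (-((N : ℝ) * (d : ℝ) / 2)) : ℝ) : ℂ) *
    ∫ ξ : Rd d, fh ξ * (starRingEnd ℂ) (φth (mvec ((((toR M)ᵀ)⁻¹) ^ N) ξ)) *
      Complex.exp (Complex.I * (dotp (mvec ((toR M)⁻¹ ^ N) (latt d k + v)) ξ : ℂ))

/-- `φ` (given by its Fourier transform `φh`) is `M`-refinable with mask symbol `a`. -/
def IsRefinable {d : ℕ} (M : Matrix (Fin d) (Fin d) ℤ) (φh a : Rd d → ℂ) : Prop :=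
  IsTrigPoly a ∧ ∀ ξ : Rd d, φh (mvec ((toR M)ᵀ) ξ) = a ξ * φh ξ

/-- The frame-type sum `∑_k |⟨f,φ_{0,k}⟩_{H^σ}|² + ∑_ℓ ∑_{j≥0} ∑_k |⟨f,ψ^ℓ_{j,k}⟩_{H^σ}|²`,
where the wavelet dilates carry the normalization exponent `c`. -/
def frameSum {d L : ℕ} (M : Matrix (Fin d) (Fin d) ℤ) (m σ c : ℝ)
    (φh : Rd d → ℂ) (ψh : Fin L → Rd d → ℂ) (fh : Rd d → ℂ) : ℝ :=
  (∑' k : Fin d → ℤ, ‖pairS σ fh (translF (latt d k) φh)‖ ^ 2)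
    + ∑ ℓ : Fin L, ∑' (j : ℕ) (k : Fin d → ℤ), ‖pairS σ fh (dilF M m c (ψh ℓ) j k)‖ ^ 2

/-- `X^s(φ;ψ¹,…,ψ^L)` and `X^{-s}(φ̃;ψ̃¹,…,ψ̃^L)` (with mask symbols `b ℓ`, `bt ℓ`)
form a pair of dual `M`-framelet systems for `(H^s(ℝ^d), H^{-s}(ℝ^d))`. -/
def IsDualFramelet (d L : ℕ) (M : Matrix (Fin d) (Fin d) ℤ) (m s : ℝ)
    (φh φth : Rd d → ℂ) (b bt : Fin L → Rd d → ℂ) : Prop :=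
  (∃ C₁ > (0:ℝ), ∃ C₂ > (0:ℝ), ∀ fh : Rd d → ℂ, MemSob s fh →
      C₁ * sobSq s fh ≤
          frameSum M m s ((d : ℝ) / 2 + s) φh (fun ℓ => waveF M (b ℓ) φh) fh ∧
        frameSum M m s ((d : ℝ) / 2 + s) φh (fun ℓ => waveF M (b ℓ) φh) fh ≤
          C₂ * sobSq s fh) ∧
  (∃ C₁ > (0:ℝ), ∃ C₂ > (0:ℝ), ∀ gh : Rd d → ℂ, MemSob (-s) gh →
      C₁ * sobSq (-s) gh ≤
          frameSum M m (-s) ((d : ℝ) / 2 - s) φth (fun ℓ => waveF M (bt ℓ) φth) gh ∧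
        frameSum M m (-s) ((d : ℝ) / 2 - s) φth (fun ℓ => waveF M (bt ℓ) φth) gh ≤
          C₂ * sobSq (-s) gh) ∧
  (∀ fh gh : Rd d → ℂ, MemSob s fh → MemSob (-s) gh →
      pair0 fh gh =
        (∑' k : Fin d → ℤ,
            pair0 (translF (latt d k) φh) gh * pair0 fh (translF (latt d k) φth))
          + ∑ ℓ : Fin L, ∑' (j : ℕ) (k : Fin d → ℤ),
              pair0 (dilF M m ((d : ℝ) / 2 + s) (waveF M (b ℓ) φh) j k) gh *
                pair0 fh (dilF M m ((d : ℝ) / 2 - s) (waveF M (bt ℓ) φth) j k))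

/-- The Fourier transform of the truncated framelet series `S^N_φ f`. -/
def SNF {d L : ℕ} (M : Matrix (Fin d) (Fin d) ℤ) (m s : ℝ)
    (φh φth : Rd d → ℂ) (b bt : Fin L → Rd d → ℂ) (N : ℕ) (fh : Rd d → ℂ) : Rd d → ℂ :=
  fun ξ => (∑' k : Fin d → ℤ,
      pair0 fh (translF (latt d k) φth) * translF (latt d k) φh ξ)
    + ∑ ℓ : Fin L, ∑ j ∈ Finset.range N, ∑' k : Fin d → ℤ,
        pair0 fh (dilF M m ((d : ℝ) / 2 - s) (waveF M (bt ℓ) φth) j k) *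
          dilF M m ((d : ℝ) / 2 + s) (waveF M (b ℓ) φh) j k ξ

/-- The spatial form of the truncated framelet operator
`S^N_φ f = ∑_k ⟨f,φ̃_{0,k}⟩φ_{0,k} + ∑_ℓ ∑_{j<N} ∑_k ⟨f,ψ̃^{ℓ,-s}_{j,k}⟩ψ^{ℓ,s}_{j,k}`. -/
def SNtr {d L : ℕ} (M : Matrix (Fin d) (Fin d) ℤ) (m s : ℝ)
    (φ : Rd d → ℂ) (ψ : Fin L → Rd d → ℂ) (φth : Rd d → ℂ) (bt : Fin L → Rd d → ℂ)
    (N : ℕ) (f : Rd d → ℂ) : Rd d → ℂ :=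
  fun x => (∑' k : Fin d → ℤ,
      pair0 (FT f) (translF (latt d k) φth) * φ (x - latt d k))
    + ∑ ℓ : Fin L, ∑ j ∈ Finset.range N, ∑' k : Fin d → ℤ,
        pair0 (FT f) (dilF M m ((d : ℝ) / 2 - s) (waveF M (bt ℓ) φth) j k) *
          (((m ^ ((j : ℝ) * ((d : ℝ) / 2 - s)) : ℝ) : ℂ) *
            ψ ℓ (mvec ((toR M) ^ j) x - latt d k))

open Classical in
/-- `φ` with mask symbol `a` has `κ+1` sum rules. -/
def HasSumRules {d : ℕ} (M : Matrix (Fin d) (Fin d) ℤ) (a : Rd d → ℂ) (κ : ℕ) : Prop :=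
  ∃ Y : Rd d → ℂ, IsTrigPoly Y ∧ Y 0 ≠ 0 ∧
    ∀ q : Fin d → ℤ, ∃ C > (0:ℝ), ∃ r > (0:ℝ), ∀ ξ : Rd d, ‖ξ‖ ≤ r →
      ‖Y (mvec ((toR M)ᵀ) ξ) * a (ξ + (2 * π) • mvec (((toR M)ᵀ)⁻¹) (latt d q)) -
          (if ∃ z : Fin d → ℤ, mvec (((toR M)ᵀ)⁻¹) (latt d q) = latt d z then 1 else 0) *
            Y ξ‖ ≤ C * ‖ξ‖ ^ ((κ : ℝ) + 1)

/-- The exponent `η_{κ+1}(s,ς) = (κ+1-s)(ς-s)/(κ+1+ς-s)`. -/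
def eta (κ : ℕ) (s ς : ℝ) : ℝ := ((κ : ℝ) + 1 - s) * (ς - s) / ((κ : ℝ) + 1 + ς - s)

/-- The exponent `ζ = min{ς-s, 1, ((4s+(α-2)d)/(2s-α+2)+d)/2}`. -/
def zeta (d : ℕ) (s ς α : ℝ) : ℝ :=
  min (ς - s) (min 1 (((4 * s + (α - 2) * (d : ℝ)) / (2 * s - α + 2) + (d : ℝ)) / 2))

end


noncomputable section
namespace TailAux
open Finset MeasureTheory

lemma coord_bound (t : ℝ) (c : ℤ) (ht0 : 0 ≤ t) (ht1 : t < 2*π) :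
    (c:ℝ)^2 ≤ (t + 2*π*c)^2 + 1 := by
  have hπ := Real.pi_gt_three
  by_cases h1 : 1 ≤ c
  · have hc : (1:ℝ) ≤ (c:ℝ) := by exact_mod_cast h1
    have h6 : (c:ℝ) ≤ t + 2*π*c := by nlinarith
    nlinarith
  · by_cases h2 : c ≤ -2
    · have hc : (c:ℝ) ≤ -2 := by exact_mod_cast h2
      have hη : t + 2*π*c ≤ 2*π*((c:ℝ)+1) := by nlinarith
      have h3 : 2*π*((c:ℝ)+1) ≤ 0 := by nlinarith
      have h4 : (2*π*((c:ℝ)+1))^2 ≤ (t + 2*π*c)^2 := by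
        nlinarith [mul_nonneg (sub_nonneg.2 hη)
          (neg_nonneg.2 (by linarith : (t + 2*π*c) + 2*π*((c:ℝ)+1) ≤ 0))]
      have h5 : -(c:ℝ) ≤ 2*π*(-(c:ℝ)-1) := by nlinarith
      have h5' : (0:ℝ) ≤ -(c:ℝ) := by linarith
      have h6 : (c:ℝ)^2 ≤ (2*π*((c:ℝ)+1))^2 := by
        nlinarith [mul_le_mul h5 h5 h5' (by linarith : (0:ℝ) ≤ 2*π*(-(c:ℝ)-1))]
      nlinarith
    · have : c = 0 ∨ c = -1 := by omega
      rcases this with h | h <;> subst h <;> push_cast <;> nlinarith [sq_nonneg (t + 2*π*(-1:ℝ))]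


lemma norm_one_sub_exp_sq (θ : ℝ) :
    ‖(1:ℂ) - Complex.exp (Complex.I * θ)‖^2 = 2 - 2 * Real.cos θ := by
  rw [mul_comm Complex.I (θ:ℂ), Complex.exp_mul_I]
  rw [Complex.sq_norm, Complex.normSq_apply]
  simp [Complex.sub_re, Complex.sub_im, Complex.add_re, Complex.add_im,
    Complex.cos_ofReal_re, Complex.sin_ofReal_re, Complex.cos_ofReal_im, Complex.sin_ofReal_im]
  nlinarith [Real.sin_sq_add_cos_sq θ]

lemma two_sub_cos_le_sq (θ : ℝ) : 2 - 2 * Real.cos θ ≤ θ^2 := by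
  have h1 : Real.sin (θ/2)^2 ≤ (θ/2)^2 := Real.sin_sq_le_sq
  have h2 : Real.sin (θ/2)^2 + Real.cos (θ/2)^2 = 1 := Real.sin_sq_add_cos_sq _
  have h3 : Real.cos θ = 2 * Real.cos (θ/2)^2 - 1 := by
    rw [show θ = 2*(θ/2) by ring, Real.cos_two_mul]; ring_nf
  nlinarith

lemma osc_bound (α : ℝ) (hα0 : 0 < α) (hα2 : α ≤ 2) (θ x : ℝ) (hx : |θ| ≤ x) :
    ‖(1:ℂ) - Complex.exp (Complex.I * θ)‖^2 ≤ 4 * x ^ α := by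
  have hx0 : 0 ≤ x := le_trans (abs_nonneg θ) hx
  rw [norm_one_sub_exp_sq]
  rcases le_or_gt 1 x with h | h
  · have : (1:ℝ) ≤ x ^ α := by
      calc (1:ℝ) = 1 ^ α := (Real.one_rpow α).symm
      _ ≤ x ^ α := Real.rpow_le_rpow zero_le_one h hα0.le
    nlinarith [Real.neg_one_le_cos θ]
  · rcases eq_or_lt_of_le hx0 with h0 | h0
    · have hθ : |θ| = 0 := le_antisymm (h0 ▸ hx) (abs_nonneg θ)
      have hθ' : θ = 0 := abs_eq_zero.mp hθ
      simp [hθ', Real.zero_rpow (ne_of_gt hα0), ← h0]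
    · have h1 : 2 - 2*Real.cos θ ≤ θ^2 := two_sub_cos_le_sq θ
      have habs := abs_le.mp hx
      have h2 : θ^2 ≤ x^2 := sq_le_sq' habs.1 habs.2
      have h3 : x^(2:ℕ) = x^((2:ℕ):ℝ) := (Real.rpow_natCast x 2).symm
      have h4 : x^((2:ℕ):ℝ) ≤ x^α := by
        apply Real.rpow_le_rpow_of_exponent_ge h0 h.le; exact_mod_cast hα2
      have h5 : x^2 ≤ x^α := by rw [show x^2 = x^(2:ℕ) by norm_num] at h2 ⊢; linarith [h3 ▸ h4]
      linarith [Real.rpow_nonneg hx0 α]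


lemma sum_rpow_tail (p : ℝ) (hp : 1 < p) (N : ℕ) (hN : 1 ≤ N) (T : Finset ℕ)
    (hT : ∀ n ∈ T, N ≤ n) :
    ∑ n ∈ T, (n:ℝ)^(-p) ≤ (1 + (p-1)⁻¹) * (N:ℝ)^(1-p) := by
  have hN0 : (0:ℝ) < N := by exact_mod_cast hN
  have hN1 : (1:ℝ) ≤ N := by exact_mod_cast hN
  have hrpos : (0:ℝ) ≤ (N:ℝ)^(1-p) := (Real.rpow_pos_of_pos hN0 _).le
  have hc : (0:ℝ) < (p-1)⁻¹ := inv_pos.mpr (by linarith)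
  rcases T.eq_empty_or_nonempty with rfl | hTne
  · simp; positivity
  set M := T.sup id with hM
  have hNM : N ≤ M := by
    obtain ⟨n, hn⟩ := hTne
    exact le_trans (hT n hn) (Finset.le_sup (f := id) hn)
  have hNMr : (N:ℝ) ≤ (M:ℝ) := by exact_mod_cast hNM
  have hsub : T ⊆ Finset.Icc N M := by
    intro n hn; exact Finset.mem_Icc.mpr ⟨hT n hn, Finset.le_sup (f := id) hn⟩
  have h1 : ∑ n ∈ T, (n:ℝ)^(-p) ≤ ∑ n ∈ Finset.Icc N M, (n:ℝ)^(-p) :=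
    Finset.sum_le_sum_of_subset_of_nonneg hsub
      (fun n _ _ => Real.rpow_nonneg (Nat.cast_nonneg n) _)
  have hsplit : Finset.Icc N M = insert N (Finset.Icc (N+1) M) := by
    rw [Finset.Icc_add_one_left_eq_Ioc, Finset.Ioc_insert_left hNM]
  have h2 : ∑ n ∈ Finset.Icc N M, (n:ℝ)^(-p)
      = (N:ℝ)^(-p) + ∑ n ∈ Finset.Icc (N+1) M, (n:ℝ)^(-p) := by
    rw [hsplit, Finset.sum_insert (by simp)]
  have himg : Finset.Icc (N+1) M = (Finset.Ico N M).image (· + 1) := by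
    rw [Finset.image_add_right_Ico, Finset.Ico_add_one_right_eq_Icc]
  have h3 : ∑ n ∈ Finset.Icc (N+1) M, (n:ℝ)^(-p)
      = ∑ i ∈ Finset.Ico N M, ((i+1 : ℕ):ℝ)^(-p) := by
    rw [himg, Finset.sum_image (by intro a _ b _ h; exact Nat.add_right_cancel h)]
  have hanti : AntitoneOn (fun x : ℝ => x^(-p)) (Set.Icc (N:ℝ) M) := by
    intro a ha b hb hab
    exact Real.rpow_le_rpow_of_nonpos (lt_of_lt_of_le hN0 ha.1) hab (by linarith)
  have h4 : ∑ i ∈ Finset.Ico N M, (((i+1:ℕ)):ℝ)^(-p)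
      ≤ ∫ x in (N:ℝ)..(M:ℝ), x^(-p) :=
    AntitoneOn.sum_le_integral_Ico hNM hanti
  have h5 : ∫ x in (N:ℝ)..(M:ℝ), x^(-p) = ((M:ℝ)^(1-p) - (N:ℝ)^(1-p))/(1-p) := by
    rw [integral_rpow]
    · rw [show -p + 1 = 1 - p from by ring]
    · right
      refine ⟨by intro h; linarith, ?_⟩
      rw [Set.uIcc_of_le hNMr]
      intro h
      exact absurd h.1 (by linarith)
  have h6 : ((M:ℝ)^(1-p) - (N:ℝ)^(1-p))/(1-p) ≤ (p-1)⁻¹ * (N:ℝ)^(1-p) := by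
    have hM0 : (0:ℝ) ≤ (M:ℝ)^(1-p) := Real.rpow_nonneg (by positivity) _
    have hp1 : (0:ℝ) < p - 1 := by linarith
    rw [div_le_iff_of_neg (by linarith : (1:ℝ)-p < 0)]
    have e : (p-1)⁻¹ * (N:ℝ)^(1-p) * (1-p) = -((p-1)⁻¹*(p-1)*((N:ℝ)^(1-p))) := by ring
    rw [e, inv_mul_cancel₀ (ne_of_gt hp1), one_mul]
    linarith
  have h7 : (N:ℝ)^(-p) ≤ (N:ℝ)^(1-p) :=
    Real.rpow_le_rpow_of_exponent_le hN1 (by linarith)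
  calc ∑ n ∈ T, (n:ℝ)^(-p) ≤ ∑ n ∈ Finset.Icc N M, (n:ℝ)^(-p) := h1
    _ = (N:ℝ)^(-p) + ∑ n ∈ Finset.Icc (N+1) M, (n:ℝ)^(-p) := h2
    _ ≤ (N:ℝ)^(1-p) + (p-1)⁻¹ * (N:ℝ)^(1-p) := by
        rw [h3]; linarith [le_trans h4 (le_of_eq h5), h6, le_trans (le_trans h4 (le_of_eq h5)) h6]
    _ = (1 + (p-1)⁻¹) * (N:ℝ)^(1-p) := by ring

lemma shell_card (d : ℕ) (hd : 1 ≤ d) (n : ℕ) (hn : 1 ≤ n) (S : Finset (Fin d → ℤ))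
    (hS : ∀ j ∈ S, (Finset.univ.sup fun i => (j i).natAbs) = n) :
    S.card ≤ d * (2 * (2*n+1)^(d-1)) := by
  classical
  set B : Fin d → Finset (Fin d → ℤ) := fun i =>
    Fintype.piFinset (fun k => if k = i then ({-(n:ℤ), (n:ℤ)} : Finset ℤ)
      else Finset.Icc (-(n:ℤ)) (n:ℤ)) with hB
  have hsub : S ⊆ Finset.univ.biUnion B := by
    intro j hj
    have hsup := hS j hj
    haveI : Nonempty (Fin d) := ⟨⟨0, hd⟩⟩
    obtain ⟨i₀, -, hi₀⟩ := Finset.exists_mem_eq_sup Finset.univ Finset.univ_nonempty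
      (fun i => (j i).natAbs)
    rw [hsup] at hi₀
    refine Finset.mem_biUnion.mpr ⟨i₀, Finset.mem_univ _, ?_⟩
    rw [hB]
    refine Fintype.mem_piFinset.mpr (fun k => ?_)
    by_cases hk : k = i₀
    · simp only [hk, if_pos rfl]
      have : (j i₀).natAbs = n := hi₀.symm
      rcases Int.natAbs_eq_iff.mp this with h | h
      · simp [h]
      · simp [h]
    · simp only [if_neg hk]
      have hle : (j k).natAbs ≤ n :=
        hsup ▸ Finset.le_sup (f := fun i => (j i).natAbs) (Finset.mem_univ k)
      rw [Finset.mem_Icc]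
      omega
  have hcard : ∀ i, (B i).card = 2 * (2*n+1)^(d-1) := by
    intro i
    rw [hB]
    rw [Fintype.card_piFinset]
    rw [Finset.prod_eq_mul_prod_sdiff_singleton_of_mem (Finset.mem_univ i)]
    have h1 : (if i = i then ({-(n:ℤ), (n:ℤ)} : Finset ℤ) else Finset.Icc (-(n:ℤ)) (n:ℤ)).card = 2 := by
      rw [if_pos rfl]
      rw [Finset.card_insert_of_notMem (by simp; omega), Finset.card_singleton]
    rw [h1]
    congr 1
    have h2 : ∀ k ∈ Finset.univ \ {i},
        (if k = i then ({-(n:ℤ), (n:ℤ)} : Finset ℤ) else Finset.Icc (-(n:ℤ)) (n:ℤ)).card = 2*n+1 := by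
      intro k hk
      rw [Finset.mem_sdiff, Finset.mem_singleton] at hk
      rw [if_neg hk.2, Int.card_Icc]
      omega
    rw [Finset.prod_congr rfl h2, Finset.prod_const]
    congr 1
    rw [Finset.card_sdiff_of_subset (by simp), Finset.card_singleton, Finset.card_univ, Fintype.card_fin]
  calc S.card ≤ (Finset.univ.biUnion B).card := Finset.card_le_card hsub
    _ ≤ ∑ i, (B i).card := Finset.card_biUnion_le
    _ = d * (2 * (2*n+1)^(d-1)) := by
        rw [Finset.sum_congr rfl (fun i _ => hcard i), Finset.sum_const, Finset.card_univ,
          Fintype.card_fin, smul_eq_mul]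

lemma lattice_tail (d : ℕ) (hd : 1 ≤ d) (σ : ℝ) (hσ : (d:ℝ)/2 < σ) :
    ∃ C > (0:ℝ), ∀ R : ℝ, (d:ℝ) ≤ R → ∀ G : Finset (Fin d → ℤ),
      (∀ j ∈ G, R^2 ≤ ∑ i, ((j i:ℝ))^2) →
      ∑ j ∈ G, (1 + ∑ i, ((j i:ℝ))^2)^(-σ) ≤ C * R ^ ((d:ℝ) - 2*σ) := by
  classical
  set p : ℝ := 2*σ - (d:ℝ) + 1 with hp
  have hp1 : 1 < p := by rw [hp]; linarith
  have hd0 : (0:ℝ) < d := by exact_mod_cast hd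
  have hsd : (0:ℝ) < Real.sqrt d := Real.sqrt_pos.mpr hd0
  have hp0 : (0:ℝ) < p - 1 := by rw [hp]; linarith
  refine ⟨(2*d*3^(d-1) : ℝ) * ((1 + (p-1)⁻¹) * (Real.sqrt d)^(2*σ-(d:ℝ))), by positivity, ?_⟩
  intro R hR G hG
  have hR1 : (1:ℝ) ≤ R := le_trans (by exact_mod_cast hd) hR
  have hR0 : (0:ℝ) < R := lt_of_lt_of_le one_pos hR1
  -- sqrt d ≤ d ≤ R
  have hsdd : Real.sqrt d ≤ (d:ℝ) := by
    have hd1 : (1:ℝ) ≤ (d:ℝ) := by exact_mod_cast hd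
    have h := Real.sqrt_le_sqrt (by nlinarith : (d:ℝ) ≤ (d:ℝ)^2)
    rwa [Real.sqrt_sq hd0.le] at h
  have hRsd : (1:ℝ) ≤ R / Real.sqrt d := by
    rw [le_div_iff₀ hsd]; linarith
  set nrm : (Fin d → ℤ) → ℕ := fun j => Finset.univ.sup (fun i => (j i).natAbs) with hnrm
  set N : ℕ := ⌈R / Real.sqrt d⌉₊ with hN
  have hN1 : 1 ≤ N := by
    rw [hN]; exact_mod_cast Nat.one_le_ceil_iff.mpr (by linarith)
  -- each j in G has nrm j ≥ N and ≥ 1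
  have hkey : ∀ j ∈ G, R / Real.sqrt d ≤ (nrm j : ℝ) := by
    intro j hj
    have h1 : ∑ i, ((j i:ℝ))^2 ≤ (d:ℝ) * ((nrm j:ℝ))^2 := by
      calc ∑ i, ((j i:ℝ))^2 ≤ ∑ _i : Fin d, ((nrm j:ℝ))^2 := by
            apply Finset.sum_le_sum
            intro i _
            have h2 : (j i).natAbs ≤ nrm j := Finset.le_sup (f := fun i => (j i).natAbs) (Finset.mem_univ i)
            have h3 : ((j i).natAbs : ℝ) ≤ (nrm j : ℝ) := by exact_mod_cast h2
            have h4 : ((j i:ℝ))^2 = (((j i).natAbs : ℝ))^2 := by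
              rw [Nat.cast_natAbs]; push_cast; rw [sq_abs]
            rw [h4]
            exact pow_le_pow_left₀ (by positivity) h3 2
        _ = (d:ℝ) * ((nrm j:ℝ))^2 := by rw [Finset.sum_const, Finset.card_univ,
              Fintype.card_fin, nsmul_eq_mul]
    have h5 : R^2 ≤ (d:ℝ) * ((nrm j:ℝ))^2 := le_trans (hG j hj) h1
    have h6 : (R / Real.sqrt d)^2 ≤ ((nrm j:ℝ))^2 := by
      rw [div_pow, Real.sq_sqrt hd0.le]
      rw [div_le_iff₀ hd0]; linarith
    calc R / Real.sqrt d = Real.sqrt ((R / Real.sqrt d)^2) :=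
          (Real.sqrt_sq (by positivity)).symm
      _ ≤ Real.sqrt (((nrm j:ℝ))^2) := Real.sqrt_le_sqrt h6
      _ = (nrm j : ℝ) := Real.sqrt_sq (by positivity)
  have hmemN : ∀ j ∈ G, N ≤ nrm j := fun j hj => Nat.ceil_le.mpr (hkey j hj)
  -- termwise bound by (nrm j)^(-2σ)
  have hterm : ∀ j ∈ G, (1 + ∑ i, ((j i:ℝ))^2)^(-σ) ≤ ((nrm j:ℝ))^(-(2*σ)) := by
    intro j hj
    have hn1 : 1 ≤ nrm j := le_trans hN1 (hmemN j hj)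
    have hn0 : (0:ℝ) < (nrm j:ℝ) := by exact_mod_cast hn1
    have hb : ((nrm j:ℝ))^2 ≤ 1 + ∑ i, ((j i:ℝ))^2 := by
      haveI : Nonempty (Fin d) := ⟨⟨0, hd⟩⟩
      obtain ⟨i₀, -, hi₀⟩ := Finset.exists_mem_eq_sup Finset.univ Finset.univ_nonempty
        (fun i => (j i).natAbs)
      have h4 : ((nrm j:ℝ))^2 = ((j i₀:ℝ))^2 := by
        simp only [hnrm]
        rw [hi₀, Nat.cast_natAbs]; push_cast; rw [sq_abs]
      rw [h4]
      have : ((j i₀:ℝ))^2 ≤ ∑ i, ((j i:ℝ))^2 :=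
        Finset.single_le_sum (f := fun i => ((j i:ℝ))^2) (fun i _ => sq_nonneg _)
          (Finset.mem_univ i₀)
      linarith
    calc (1 + ∑ i, ((j i:ℝ))^2)^(-σ) ≤ (((nrm j:ℝ))^2)^(-σ) := by
          apply Real.rpow_le_rpow_of_nonpos (by positivity) hb (by linarith)
      _ = ((nrm j:ℝ))^(-(2*σ)) := by
          rw [← Real.rpow_natCast (nrm j : ℝ) 2, ← Real.rpow_mul hn0.le]
          norm_num
  -- fiberwise decomposition
  set t : Finset ℕ := G.image nrm with ht
  have h8 : ∑ j ∈ G, ((nrm j:ℝ))^(-(2*σ))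
      = ∑ n ∈ t, ∑ j ∈ G.filter (fun j => nrm j = n), ((n:ℝ))^(-(2*σ)) := by
    rw [Finset.sum_fiberwise_of_maps_to' (fun j hj => Finset.mem_image_of_mem nrm hj)
      (fun n => ((n:ℝ))^(-(2*σ)))]
  have h9 : ∀ n ∈ t, ∑ j ∈ G.filter (fun j => nrm j = n), ((n:ℝ))^(-(2*σ))
      ≤ (2*(d:ℝ)*3^(d-1)) * ((n:ℝ))^(-p) := by
    intro n hn
    obtain ⟨j₀, hj₀, hj₀n⟩ := Finset.mem_image.mp hn
    have hnN : N ≤ n := hj₀n ▸ hmemN j₀ hj₀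
    have hn1 : 1 ≤ n := le_trans hN1 hnN
    have hn0 : (0:ℝ) < (n:ℝ) := by exact_mod_cast hn1
    rw [Finset.sum_const, nsmul_eq_mul]
    have hcard : (G.filter (fun j => nrm j = n)).card ≤ d * (2 * (2*n+1)^(d-1)) := by
      apply shell_card d hd n hn1
      intro j hj
      exact (Finset.mem_filter.mp hj).2
    have hcc : ((G.filter (fun j => nrm j = n)).card : ℝ) ≤ (d:ℝ) * (2 * (2*(n:ℝ)+1)^(d-1)) := by
      calc ((G.filter (fun j => nrm j = n)).card : ℝ)
          ≤ ((d * (2 * (2*n+1)^(d-1)) : ℕ) : ℝ) := by exact_mod_cast hcard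
        _ = (d:ℝ) * (2 * (2*(n:ℝ)+1)^(d-1)) := by push_cast; ring
    have h2n : (2*(n:ℝ)+1)^(d-1) ≤ (3:ℝ)^(d-1) * ((n:ℝ))^(d-1) := by
      calc (2*(n:ℝ)+1)^(d-1) ≤ (3*(n:ℝ))^(d-1) := by
            apply pow_le_pow_left₀ (by positivity)
            have : (1:ℝ) ≤ (n:ℝ) := by exact_mod_cast hn1
            linarith
        _ = (3:ℝ)^(d-1) * ((n:ℝ))^(d-1) := mul_pow 3 (n:ℝ) (d-1)
    have hnp : ((n:ℝ))^(d-1) * ((n:ℝ))^(-(2*σ)) = ((n:ℝ))^(-p) := by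
      rw [← Real.rpow_natCast (n:ℝ) (d-1), ← Real.rpow_add hn0]
      congr 1
      have : ((d-1 : ℕ):ℝ) = (d:ℝ) - 1 := by
        have : 1 ≤ d := hd
        push_cast [Nat.cast_sub this]; ring
      rw [this, hp]; ring
    have hrp : (0:ℝ) ≤ ((n:ℝ))^(-(2*σ)) := Real.rpow_nonneg hn0.le _
    calc ((G.filter (fun j => nrm j = n)).card : ℝ) * ((n:ℝ))^(-(2*σ))
        ≤ ((d:ℝ) * (2 * (2*(n:ℝ)+1)^(d-1))) * ((n:ℝ))^(-(2*σ)) :=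
          mul_le_mul_of_nonneg_right hcc hrp
      _ ≤ ((d:ℝ) * (2 * ((3:ℝ)^(d-1) * ((n:ℝ))^(d-1)))) * ((n:ℝ))^(-(2*σ)) := by
          apply mul_le_mul_of_nonneg_right _ hrp
          apply mul_le_mul_of_nonneg_left _ hd0.le
          apply mul_le_mul_of_nonneg_left h2n (by norm_num)
      _ = (2*(d:ℝ)*3^(d-1)) * (((n:ℝ))^(d-1) * ((n:ℝ))^(-(2*σ))) := by ring
      _ = (2*(d:ℝ)*3^(d-1)) * ((n:ℝ))^(-p) := by rw [hnp]
  have h10 : ∑ n ∈ t, ((n:ℝ))^(-p) ≤ (1 + (p-1)⁻¹) * ((N:ℝ))^(1-p) := by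
    apply sum_rpow_tail p hp1 N hN1
    intro n hn
    obtain ⟨j₀, hj₀, hj₀n⟩ := Finset.mem_image.mp hn
    exact hj₀n ▸ hmemN j₀ hj₀
  have h11 : ((N:ℝ))^(1-p) ≤ (R / Real.sqrt d)^(1-p) := by
    apply Real.rpow_le_rpow_of_nonpos (by positivity) (Nat.le_ceil _) (by linarith)
  have h12 : (R / Real.sqrt d)^(1-p) = (Real.sqrt d)^(2*σ-(d:ℝ)) * R^((d:ℝ)-2*σ) := by
    rw [Real.div_rpow hR0.le hsd.le]
    rw [show (1-p) = (d:ℝ)-2*σ from by rw [hp]; ring]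
    rw [div_eq_mul_inv, ← Real.rpow_neg hsd.le]
    rw [show -((d:ℝ)-2*σ) = 2*σ-(d:ℝ) from by ring]
    ring
  -- assemble
  have hA : ∑ j ∈ G, (1 + ∑ i, ((j i:ℝ))^2)^(-σ) ≤ ∑ j ∈ G, ((nrm j:ℝ))^(-(2*σ)) :=
    Finset.sum_le_sum hterm
  have hB2 : ∑ n ∈ t, ∑ j ∈ G.filter (fun j => nrm j = n), ((n:ℝ))^(-(2*σ))
      ≤ (2*(d:ℝ)*3^(d-1)) * ∑ n ∈ t, ((n:ℝ))^(-p) := by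
    rw [Finset.mul_sum]
    exact Finset.sum_le_sum h9
  have hmono : (2*(d:ℝ)*3^(d-1)) * ∑ n ∈ t, ((n:ℝ))^(-p)
      ≤ (2*(d:ℝ)*3^(d-1)) * ((1 + (p-1)⁻¹) * ((R / Real.sqrt d)^(1-p))) := by
    apply mul_le_mul_of_nonneg_left _ (by positivity)
    calc ∑ n ∈ t, ((n:ℝ))^(-p) ≤ (1 + (p-1)⁻¹) * ((N:ℝ))^(1-p) := h10
      _ ≤ (1 + (p-1)⁻¹) * ((R / Real.sqrt d)^(1-p)) := by
          apply mul_le_mul_of_nonneg_left h11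
          have : (0:ℝ) < p - 1 := by linarith
          positivity
  calc ∑ j ∈ G, (1 + ∑ i, ((j i:ℝ))^2)^(-σ)
      ≤ ∑ j ∈ G, ((nrm j:ℝ))^(-(2*σ)) := hA
    _ = ∑ n ∈ t, ∑ j ∈ G.filter (fun j => nrm j = n), ((n:ℝ))^(-(2*σ)) := h8
    _ ≤ (2*(d:ℝ)*3^(d-1)) * ∑ n ∈ t, ((n:ℝ))^(-p) := hB2
    _ ≤ (2*(d:ℝ)*3^(d-1)) * ((1 + (p-1)⁻¹) * ((R / Real.sqrt d)^(1-p))) := hmono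
    _ = (2*(d:ℝ)*3^(d-1)) * ((1 + (p-1)⁻¹) * (Real.sqrt d)^(2*σ-(d:ℝ))) * R^((d:ℝ)-2*σ) := by
        rw [h12]; ring


lemma norm_sq_eq {d : ℕ} (x : Rd d) : ‖x‖^2 = ∑ i, (x i)^2 := by
  have h : ‖x‖ = Real.sqrt (∑ i, (x i)^2) := by
    rw [EuclideanSpace.norm_eq]
    congr 1
    exact Finset.sum_congr rfl (fun i _ => by rw [Real.norm_eq_abs, sq_abs])
  rw [h, Real.sq_sqrt (Finset.sum_nonneg fun i _ => sq_nonneg _)]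

lemma coord_apply {d : ℕ} (ξ : Rd d) (j : Fin d → ℤ) (i : Fin d) :
    (ξ + (2 * π) • latt d j) i = ξ i + 2 * π * (j i : ℝ) := by simp [latt]

lemma measurable_coord {d : ℕ} (i : Fin d) : Measurable (fun ξ : Rd d => ξ i) :=
  (EuclideanSpace.proj i).continuous.measurable

lemma measurableSet_cube (d : ℕ) : MeasurableSet (cube d) := by
  have h : cube d = ⋂ i, (fun ξ : Rd d => ξ i) ⁻¹' (Set.Ico 0 (2*π)) := by
    ext ξ
    simp [cube, Set.mem_iInter, Set.mem_Ico]
  rw [h]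
  exact MeasurableSet.iInter fun i => (measurable_coord i) measurableSet_Ico

lemma cube_vol_lt_top (d : ℕ) : volume (cube d) < ⊤ := by
  have hsub : cube d ⊆ Metric.closedBall (0 : Rd d) (2*π*Real.sqrt d) := by
    intro ξ hξ
    rw [Metric.mem_closedBall, dist_zero_right]
    have h1 : ‖ξ‖^2 ≤ (2*π*Real.sqrt d)^2 := by
      rw [norm_sq_eq]
      calc ∑ i, (ξ i)^2 ≤ ∑ _i : Fin d, (2*π)^2 := by
            apply Finset.sum_le_sum
            intro i _
            have h := hξ i
            nlinarith [h.1, h.2, Real.pi_pos]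
        _ = (d:ℝ) * (2*π)^2 := by
            rw [Finset.sum_const, Finset.card_univ, Fintype.card_fin, nsmul_eq_mul]
        _ = (2*π*Real.sqrt d)^2 := by
            rw [mul_pow, mul_pow, Real.sq_sqrt (Nat.cast_nonneg d)]; ring
    have hX0 : (0:ℝ) ≤ 2*π*Real.sqrt d := by positivity
    calc ‖ξ‖ = Real.sqrt (‖ξ‖^2) := (Real.sqrt_sq (norm_nonneg ξ)).symm
      _ ≤ Real.sqrt ((2*π*Real.sqrt d)^2) := Real.sqrt_le_sqrt h1
      _ = 2*π*Real.sqrt d := Real.sqrt_sq hX0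
  exact lt_of_le_of_lt (measure_mono hsub) (MeasureTheory.measure_closedBall_lt_top)

lemma cube_shift {d : ℕ} (ξ : Rd d) (hξ : ξ ∈ cube d) (j : Fin d → ℤ) :
    1 + ‖latt d j‖^2 ≤ (1+(d:ℝ)) * (1 + ‖ξ + (2 * π) • latt d j‖^2) := by
  have h1 : ‖latt d j‖^2 = ∑ i, ((j i : ℝ))^2 := by
    rw [norm_sq_eq]; simp [latt]
  have h2 : ‖ξ + (2 * π) • latt d j‖^2 = ∑ i, (ξ i + 2*π*(j i:ℝ))^2 := by
    rw [norm_sq_eq]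
    exact Finset.sum_congr rfl (fun i _ => by rw [coord_apply])
  have h3 : ∑ i, ((j i : ℝ))^2 ≤ (∑ i, (ξ i + 2*π*(j i:ℝ))^2) + d := by
    calc ∑ i, ((j i : ℝ))^2 ≤ ∑ i, ((ξ i + 2*π*(j i:ℝ))^2 + 1) := by
          apply Finset.sum_le_sum
          intro i _
          exact coord_bound (ξ i) (j i) (hξ i).1 (hξ i).2
      _ = (∑ i, (ξ i + 2*π*(j i:ℝ))^2) + d := by
          rw [Finset.sum_add_distrib, Finset.sum_const, Finset.card_univ, Fintype.card_fin,
            nsmul_eq_mul, mul_one]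
  have h4 : (0:ℝ) ≤ ∑ i, (ξ i + 2*π*(j i:ℝ))^2 :=
    Finset.sum_nonneg fun i _ => sq_nonneg _
  have hd0 : (0:ℝ) ≤ d := Nat.cast_nonneg d
  rw [h1, h2]
  nlinarith

lemma integral_bound {d : ℕ} (s α : ℝ) (hα0 : 0 < α) (hα2 : α ≤ 2)
    (hσ0 : 0 < s - α/2) (u : Rd d) (j : Fin d → ℤ) :
    ∫ ξ in cube d,
        (1 + ‖ξ + (2 * π) • latt d j‖ ^ 2) ^ (-s) *
          ‖(1 : ℂ) - Complex.exp (Complex.I * (dotp u (ξ + (2 * π) • latt d j) : ℂ))‖ ^ 2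
      ≤ (4 * (1+(d:ℝ)) ^ (s - α/2) * ‖u‖ ^ α * (1 + ‖latt d j‖^2) ^ (-(s - α/2)))
          * (volume (cube d)).toReal := by
  set σ : ℝ := s - α/2 with hσdef
  set g : Rd d → ℝ := fun ξ =>
    (1 + ‖ξ + (2 * π) • latt d j‖ ^ 2) ^ (-s) *
      ‖(1 : ℂ) - Complex.exp (Complex.I * (dotp u (ξ + (2 * π) • latt d j) : ℂ))‖ ^ 2 with hg
  set Cst : ℝ := 4 * (1+(d:ℝ)) ^ σ * ‖u‖ ^ α * (1 + ‖latt d j‖^2) ^ (-σ) with hCst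
  have key : ∀ ξ ∈ cube d, ‖g ξ‖ ≤ Cst := by
    intro ξ hξ
    set η : Rd d := ξ + (2 * π) • latt d j with hη
    have hA0 : (0:ℝ) < 1 + ‖η‖^2 := by positivity
    have hg0 : 0 ≤ g ξ := by
      apply mul_nonneg (Real.rpow_nonneg hA0.le _) (sq_nonneg _)
    rw [Real.norm_eq_abs, abs_of_nonneg hg0]
    -- oscillation bound
    have hcs : |dotp u η| ≤ ‖u‖ * ‖η‖ := abs_real_inner_le_norm u η
    have hosc : ‖(1 : ℂ) - Complex.exp (Complex.I * (dotp u η : ℂ))‖ ^ 2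
        ≤ 4 * (‖u‖ * ‖η‖) ^ α := osc_bound α hα0 hα2 _ _ hcs
    have hsplit : (‖u‖ * ‖η‖) ^ α = ‖u‖ ^ α * ‖η‖ ^ α :=
      Real.mul_rpow (norm_nonneg u) (norm_nonneg η)
    have hηα : ‖η‖ ^ α ≤ (1 + ‖η‖^2) ^ (α/2) := by
      have e1 : ‖η‖ ^ α = (‖η‖^2) ^ (α/2) := by
        rw [← Real.rpow_natCast ‖η‖ 2, ← Real.rpow_mul (norm_nonneg η)]
        congr 1
        ring
      rw [e1]
      exact Real.rpow_le_rpow (sq_nonneg _) (by linarith) (by linarith)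
    have hmul : g ξ ≤ 4 * ‖u‖ ^ α * ((1 + ‖η‖^2) ^ (-s) * (1 + ‖η‖^2) ^ (α/2)) := by
      have h1 : g ξ ≤ (1 + ‖η‖^2) ^ (-s) * (4 * (‖u‖ * ‖η‖) ^ α) := by
        apply mul_le_mul_of_nonneg_left hosc (Real.rpow_nonneg hA0.le _)
      calc g ξ ≤ (1 + ‖η‖^2) ^ (-s) * (4 * (‖u‖ * ‖η‖) ^ α) := h1
        _ = 4 * ‖u‖ ^ α * ((1 + ‖η‖^2) ^ (-s) * ‖η‖ ^ α) := by rw [hsplit]; ring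
        _ ≤ 4 * ‖u‖ ^ α * ((1 + ‖η‖^2) ^ (-s) * (1 + ‖η‖^2) ^ (α/2)) := by
            apply mul_le_mul_of_nonneg_left _ (by positivity)
            exact mul_le_mul_of_nonneg_left hηα (Real.rpow_nonneg hA0.le _)
    have hcomb : (1 + ‖η‖^2) ^ (-s) * (1 + ‖η‖^2) ^ (α/2) = (1 + ‖η‖^2) ^ (-σ) := by
      rw [← Real.rpow_add hA0, hσdef]; ring_nf
    have hshift : (1 + ‖η‖^2) ^ (-σ) ≤ (1+(d:ℝ)) ^ σ * (1 + ‖latt d j‖^2) ^ (-σ) := by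
      have hB0 : (0:ℝ) < 1 + ‖latt d j‖^2 := by positivity
      have hd1 : (0:ℝ) < 1 + (d:ℝ) := by positivity
      have hq : (1 + ‖latt d j‖^2) / (1+(d:ℝ)) ≤ 1 + ‖η‖^2 := by
        rw [div_le_iff₀ hd1]
        calc 1 + ‖latt d j‖^2 ≤ (1+(d:ℝ)) * (1 + ‖η‖^2) := cube_shift ξ hξ j
          _ = (1 + ‖η‖^2) * (1+(d:ℝ)) := by ring
      calc (1 + ‖η‖^2) ^ (-σ) ≤ ((1 + ‖latt d j‖^2) / (1+(d:ℝ))) ^ (-σ) :=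
            Real.rpow_le_rpow_of_nonpos (by positivity) hq (by linarith)
        _ = (1+(d:ℝ)) ^ σ * (1 + ‖latt d j‖^2) ^ (-σ) := by
            rw [Real.div_rpow hB0.le hd1.le, div_eq_mul_inv, ← Real.rpow_neg hd1.le, neg_neg,
              mul_comm]
    calc g ξ ≤ 4 * ‖u‖ ^ α * ((1 + ‖η‖^2) ^ (-s) * (1 + ‖η‖^2) ^ (α/2)) := hmul
      _ = 4 * ‖u‖ ^ α * (1 + ‖η‖^2) ^ (-σ) := by rw [hcomb]
      _ ≤ 4 * ‖u‖ ^ α * ((1+(d:ℝ)) ^ σ * (1 + ‖latt d j‖^2) ^ (-σ)) := by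
          apply mul_le_mul_of_nonneg_left hshift (by positivity)
      _ = Cst := by rw [hCst]; ring
  have hnorm := MeasureTheory.norm_setIntegral_le_of_norm_le_const (cube_vol_lt_top d)
    key
  calc (∫ ξ in cube d, g ξ) ≤ ‖∫ ξ in cube d, g ξ‖ := le_abs_self _
    _ ≤ Cst * (volume (cube d)).toReal := hnorm

end TailAux
end

noncomputable section

/-- Bound for the high-frequency part `I₁(J)` of the oscillation sum. -/
theorem tail_lattice_oscillation_sum
    (d : ℕ) (hd : 1 ≤ d) (s : ℝ) (hs : (d : ℝ) / 2 < s)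
    (α : ℝ) (hα0 : 0 < α) (hα2 : α ≤ 2) (hα : α < 2 * s - d) :
    ∃ C > (0 : ℝ), ∀ m J : ℝ, 1 < m → (d : ℝ) ≤ m ^ J → ∀ u : Rd d,
      ∑' j : {j : Fin d → ℤ // m ^ J ≤ ‖latt d j‖},
          ∫ ξ in cube d,
            (1 + ‖ξ + (2 * π) • latt d j.1‖ ^ 2) ^ (-s) *
              ‖(1 : ℂ) - Complex.exp (Complex.I * (dotp u (ξ + (2 * π) • latt d j.1) : ℂ))‖ ^ 2 ≤
        C * ‖u‖ ^ α * m ^ (-(J * (2 * s - α - d))) := by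
  classical
  have hd0 : (0:ℝ) ≤ (d:ℝ)/2 := by positivity
  set σ : ℝ := s - α/2 with hσdef
  have hσ : (d:ℝ)/2 < σ := by rw [hσdef]; linarith
  have hσ0 : 0 < s - α/2 := by linarith
  obtain ⟨CL, hCL0, hlat⟩ := TailAux.lattice_tail d hd σ hσ
  have hV0 : 0 ≤ (volume (cube d)).toReal := ENNReal.toReal_nonneg
  have hdp : (0:ℝ) < (1+(d:ℝ)) ^ σ := Real.rpow_pos_of_pos (by positivity) σ
  refine ⟨4 * (1+(d:ℝ)) ^ σ * ((volume (cube d)).toReal + 1) * CL, ?_, ?_⟩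
  · apply mul_pos (mul_pos (mul_pos four_pos hdp) (by linarith)) hCL0
  intro m J hm hmJ u
  have hm0 : (0:ℝ) < m := lt_trans one_pos hm
  set R : ℝ := m ^ J with hR
  have hR0 : 0 < R := Real.rpow_pos_of_pos hm0 J
  have hRd : (d:ℝ) ≤ R := hmJ
  have hexp : m ^ (-(J * (2*s - α - (d:ℝ)))) = R ^ ((d:ℝ) - 2*σ) := by
    have he : -(J * (2*s - α - (d:ℝ))) = J * ((d:ℝ) - 2*σ) := by rw [hσdef]; ring
    rw [hR, he, Real.rpow_mul hm0.le]
  rw [hexp]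
  have huα : 0 ≤ ‖u‖ ^ α := Real.rpow_nonneg (norm_nonneg u) α
  have hRp : 0 ≤ R ^ ((d:ℝ) - 2*σ) := (Real.rpow_pos_of_pos hR0 _).le
  apply tsum_le_of_sum_le'
  · apply mul_nonneg (mul_nonneg ?_ huα) hRp
    apply mul_nonneg (mul_nonneg (mul_nonneg (by norm_num) hdp.le) (by linarith)) hCL0.le
  intro F
  set V : ℝ := (volume (cube d)).toReal with hVdef
  set K : ℝ := 4 * (1+(d:ℝ)) ^ σ * ‖u‖ ^ α * V with hKdef
  have hK0 : 0 ≤ K := by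
    apply mul_nonneg (mul_nonneg (mul_nonneg (by norm_num) hdp.le) huα) hV0
  have hnorml : ∀ j : Fin d → ℤ, ‖latt d j‖^2 = ∑ i, ((j i:ℝ))^2 := by
    intro j
    rw [TailAux.norm_sq_eq (latt d j)]; simp [latt]
  have hstep : ∀ x : {j : Fin d → ℤ // R ≤ ‖latt d j‖},
      (∫ ξ in cube d,
        (1 + ‖ξ + (2 * π) • latt d x.1‖ ^ 2) ^ (-s) *
          ‖(1 : ℂ) - Complex.exp (Complex.I * (dotp u (ξ + (2 * π) • latt d x.1) : ℂ))‖ ^ 2)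
        ≤ K * (1 + ‖latt d x.1‖^2) ^ (-σ) := by
    intro x
    have h := TailAux.integral_bound s α hα0 hα2 hσ0 u x.1
    calc (∫ ξ in cube d,
        (1 + ‖ξ + (2 * π) • latt d x.1‖ ^ 2) ^ (-s) *
          ‖(1 : ℂ) - Complex.exp (Complex.I * (dotp u (ξ + (2 * π) • latt d x.1) : ℂ))‖ ^ 2)
        ≤ (4 * (1+(d:ℝ)) ^ (s - α/2) * ‖u‖ ^ α * (1 + ‖latt d x.1‖^2) ^ (-(s - α/2)))
            * (volume (cube d)).toReal := h
      _ = K * (1 + ‖latt d x.1‖^2) ^ (-σ) := by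
          rw [hKdef, hVdef, hσdef]; ring
  set G : Finset (Fin d → ℤ) := F.image Subtype.val with hGdef
  have hG : ∀ j ∈ G, R^2 ≤ ∑ i, ((j i:ℝ))^2 := by
    intro j hj
    obtain ⟨x, hx, rfl⟩ := Finset.mem_image.mp hj
    have h1 : R ≤ ‖latt d x.1‖ := x.2
    have h2 : R^2 ≤ ‖latt d x.1‖^2 := pow_le_pow_left₀ hR0.le h1 2
    rw [← hnorml]; exact h2
  have himg : ∑ x ∈ F, (1 + ‖latt d x.1‖^2) ^ (-σ)
      = ∑ j ∈ G, (1 + ∑ i, ((j i:ℝ))^2) ^ (-σ) := by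
    rw [hGdef, Finset.sum_image (fun x _ y _ h => Subtype.ext h)]
    exact Finset.sum_congr rfl (fun x _ => by rw [hnorml x.1])
  calc ∑ x ∈ F, (∫ ξ in cube d,
        (1 + ‖ξ + (2 * π) • latt d x.1‖ ^ 2) ^ (-s) *
          ‖(1 : ℂ) - Complex.exp (Complex.I * (dotp u (ξ + (2 * π) • latt d x.1) : ℂ))‖ ^ 2)
      ≤ ∑ x ∈ F, K * (1 + ‖latt d x.1‖^2) ^ (-σ) :=
        Finset.sum_le_sum (fun x _ => hstep x)
    _ = K * ∑ x ∈ F, (1 + ‖latt d x.1‖^2) ^ (-σ) := by rw [Finset.mul_sum]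
    _ = K * ∑ j ∈ G, (1 + ∑ i, ((j i:ℝ))^2) ^ (-σ) := by rw [himg]
    _ ≤ K * (CL * R ^ ((d:ℝ) - 2*σ)) :=
        mul_le_mul_of_nonneg_left (hlat R hRd G hG) hK0
    _ = (4 * (1+(d:ℝ)) ^ σ * CL * (‖u‖ ^ α * R ^ ((d:ℝ) - 2*σ))) * V := by
        rw [hKdef]; ring
    _ ≤ (4 * (1+(d:ℝ)) ^ σ * CL * (‖u‖ ^ α * R ^ ((d:ℝ) - 2*σ))) * (V + 1) := by
        apply mul_le_mul_of_nonneg_left (by linarith)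
        apply mul_nonneg (mul_nonneg (mul_nonneg (by norm_num) hdp.le) hCL0.le)
        exact mul_nonneg huα hRp
    _ = 4 * (1+(d:ℝ)) ^ σ * (V + 1) * CL * ‖u‖ ^ α * R ^ ((d:ℝ) - 2*σ) := by ring


end
end

section
/- Let d ≥ 1, s ≥ 0, m > 1, and let J be a real number with m^J ≥ √d. Then for every u ∈ ℝ^d: ∑_{j∈ℤ^d, ‖j‖₂ < m^J} ∫_{[0,2π)^d} (1+‖ξ+2πj‖₂²)^{-s} |1 − e^{i u·(ξ+2πj)}|² dξ ≤ 4 (2π)^{2d+2} ‖u‖₂² m^{(2+d)J}. -/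
open MeasureTheory Real Filter Matrix
open scoped BigOperators

noncomputable section


section AuxLemmas

open MeasureTheory Real

lemma aux_exp_bound (θ : ℝ) : ‖(1:ℂ) - Complex.exp (Complex.I * θ)‖ ≤ |θ| := by
  rw [mul_comm, Complex.exp_mul_I]
  have h1 : (1:ℂ) - (Complex.cos θ + Complex.sin θ * Complex.I)
      = ((1 - Real.cos θ : ℝ) : ℂ) + ((-Real.sin θ : ℝ) : ℂ) * Complex.I := by
    rw [← Complex.ofReal_cos, ← Complex.ofReal_sin]; push_cast; ring
  rw [h1, Complex.norm_add_mul_I]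
  have hc := Real.one_sub_sq_div_two_le_cos (x := θ)
  have h2 : (1 - Real.cos θ)^2 + (-Real.sin θ)^2 ≤ θ^2 := by
    have hs := Real.sin_sq_add_cos_sq θ
    nlinarith [Real.neg_one_le_cos θ, Real.cos_le_one θ]
  calc Real.sqrt ((1 - Real.cos θ)^2 + (-Real.sin θ)^2) ≤ Real.sqrt (θ^2) :=
        Real.sqrt_le_sqrt h2
    _ = |θ| := Real.sqrt_sq_eq_abs θ

lemma aux_coord_le {d : ℕ} (x : Rd d) (i : Fin d) : |x i| ≤ ‖x‖ := by
  rw [EuclideanSpace.norm_eq, ← Real.sqrt_sq_eq_abs]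
  apply Real.sqrt_le_sqrt
  have := Finset.single_le_sum (f := fun i => ‖x i‖^2) (fun i _ => by positivity)
    (Finset.mem_univ i)
  simpa [Real.norm_eq_abs, sq_abs] using this

lemma aux_cube_eq (d : ℕ) : cube d =
    ((MeasurableEquiv.toLp 2 (Fin d → ℝ)).symm) ⁻¹' (Set.univ.pi fun _ => Set.Ico (0:ℝ) (2*π)) := by
  ext ξ
  simp [cube, Set.mem_pi, Set.mem_Ico]

lemma aux_cube_meas (d : ℕ) : MeasurableSet (cube d) := by
  rw [aux_cube_eq]
  exact ((MeasurableEquiv.toLp 2 (Fin d → ℝ)).symm).measurable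
    (MeasurableSet.univ_pi fun _ => measurableSet_Ico)

lemma aux_cube_vol (d : ℕ) : volume (cube d) = ENNReal.ofReal (2*π) ^ d := by
  rw [aux_cube_eq, (EuclideanSpace.volume_preserving_symm_measurableEquiv_toLp (Fin d)).measure_preimage
    ((MeasurableSet.univ_pi fun _ => measurableSet_Ico).nullMeasurableSet)]
  simp [volume_pi_pi, Real.volume_Ico]

lemma aux_norm_cube {d : ℕ} {ξ : Rd d} (hξ : ξ ∈ cube d) : ‖ξ‖ ≤ Real.sqrt d * (2*π) := by
  rw [EuclideanSpace.norm_eq]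
  calc Real.sqrt (∑ i, ‖ξ i‖^2) ≤ Real.sqrt (∑ _i : Fin d, (2*π)^2) := by
        apply Real.sqrt_le_sqrt
        apply Finset.sum_le_sum
        intro i _
        rw [Real.norm_eq_abs, sq_abs]
        have h := hξ i
        have habs : |ξ i| ≤ 2*π := abs_le.mpr ⟨by linarith [h.1, Real.pi_pos], le_of_lt h.2⟩
        calc (ξ i)^2 = |ξ i|^2 := (sq_abs _).symm
          _ ≤ (2*π)^2 := by gcongr
    _ = Real.sqrt ((d : ℝ) * (2*π)^2) := by
        rw [Finset.sum_const, Finset.card_univ, Fintype.card_fin, nsmul_eq_mul]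
    _ = Real.sqrt d * (2*π) := by
        rw [Real.sqrt_mul (by positivity), Real.sqrt_sq (by positivity)]

lemma aux_term_bound {d : ℕ} (s : ℝ) (hs : 0 ≤ s) (u : Rd d) (R : ℝ)
    (hdR : Real.sqrt d ≤ R) (j : Fin d → ℤ) (hj : ‖latt d j‖ < R) :
    (∫ ξ in cube d,
      (1 + ‖ξ + (2 * π) • latt d j‖ ^ 2) ^ (-s) *
        ‖(1 : ℂ) - Complex.exp (Complex.I * (dotp u (ξ + (2 * π) • latt d j) : ℂ))‖ ^ 2) ≤
      (‖u‖ * (4*π*R))^2 * (2*π)^d := by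
  have hπ : (0:ℝ) < π := Real.pi_pos
  have hR0 : 0 ≤ R := le_trans (Real.sqrt_nonneg _) hdR
  have key : ∀ ξ ∈ cube d,
      ‖(1 + ‖ξ + (2 * π) • latt d j‖ ^ 2) ^ (-s) *
        ‖(1 : ℂ) - Complex.exp (Complex.I * (dotp u (ξ + (2 * π) • latt d j) : ℂ))‖ ^ 2‖ ≤
      (‖u‖ * (4*π*R))^2 := by
    intro ξ hξ
    set w : Rd d := ξ + (2 * π) • latt d j with hw
    have hwnorm : ‖w‖ ≤ 4*π*R := by
      calc ‖w‖ ≤ ‖ξ‖ + ‖(2 * π) • latt d j‖ := norm_add_le _ _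
        _ = ‖ξ‖ + (2*π) * ‖latt d j‖ := by
            rw [norm_smul, Real.norm_eq_abs, abs_of_pos (by positivity)]
        _ ≤ Real.sqrt d * (2*π) + (2*π) * R :=
            add_le_add (aux_norm_cube hξ)
              (mul_le_mul_of_nonneg_left (le_of_lt hj) (by positivity))
        _ ≤ R * (2*π) + (2*π) * R :=
            add_le_add (mul_le_mul_of_nonneg_right hdR (by positivity)) le_rfl
        _ = 4*π*R := by ring
    have h1 : (1 + ‖w‖ ^ 2) ^ (-s) ≤ 1 :=
      Real.rpow_le_one_of_one_le_of_nonpos (by nlinarith [sq_nonneg ‖w‖]) (by linarith)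
    have h2 : ‖(1 : ℂ) - Complex.exp (Complex.I * (dotp u w : ℂ))‖ ≤ ‖u‖ * (4*π*R) := by
      calc ‖(1 : ℂ) - Complex.exp (Complex.I * (dotp u w : ℂ))‖ ≤ |dotp u w| :=
            aux_exp_bound (dotp u w)
        _ ≤ ‖u‖ * ‖w‖ := abs_real_inner_le_norm u w
        _ ≤ ‖u‖ * (4*π*R) := by gcongr
    rw [Real.norm_eq_abs, abs_of_nonneg (by positivity)]
    calc (1 + ‖w‖ ^ 2) ^ (-s) * ‖(1 : ℂ) - Complex.exp (Complex.I * (dotp u w : ℂ))‖ ^ 2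
        ≤ 1 * (‖u‖ * (4*π*R))^2 := by
          apply mul_le_mul h1 _ (by positivity) (by norm_num)
          exact pow_le_pow_left₀ (norm_nonneg _) h2 2
      _ = (‖u‖ * (4*π*R))^2 := one_mul _
  have hvol : volume (cube d) < ⊤ := by
    rw [aux_cube_vol]; exact ENNReal.pow_lt_top ENNReal.ofReal_lt_top
  have := norm_setIntegral_le_of_norm_le_const hvol key
  have htr : (volume (cube d)).toReal = (2*π)^d := by
    rw [aux_cube_vol, ENNReal.toReal_pow, ENNReal.toReal_ofReal (by positivity)]
  rw [measureReal_def, htr] at this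
  calc (∫ ξ in cube d, (1 + ‖ξ + (2 * π) • latt d j‖ ^ 2) ^ (-s) *
        ‖(1 : ℂ) - Complex.exp (Complex.I * (dotp u (ξ + (2 * π) • latt d j) : ℂ))‖ ^ 2)
      ≤ |∫ ξ in cube d, (1 + ‖ξ + (2 * π) • latt d j‖ ^ 2) ^ (-s) *
        ‖(1 : ℂ) - Complex.exp (Complex.I * (dotp u (ξ + (2 * π) • latt d j) : ℂ))‖ ^ 2| :=
        le_abs_self _
    _ ≤ (‖u‖ * (4*π*R))^2 * (2*π)^d := this

end AuxLemmas

/-- Bound for the low-frequency part `I₂(J)` of the oscillation sum. -/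
theorem low_lattice_oscillation_sum
    (d : ℕ) (hd : 1 ≤ d) (s : ℝ) (hs : 0 ≤ s) (m : ℝ) (hm : 1 < m)
    (J : ℝ) (hJ : Real.sqrt d ≤ m ^ J) (u : Rd d) :
    ∑' j : {j : Fin d → ℤ // ‖latt d j‖ < m ^ J},
        ∫ ξ in cube d,
          (1 + ‖ξ + (2 * π) • latt d j.1‖ ^ 2) ^ (-s) *
            ‖(1 : ℂ) - Complex.exp (Complex.I * (dotp u (ξ + (2 * π) • latt d j.1) : ℂ))‖ ^ 2 ≤
      4 * (2 * π) ^ (2 * (d : ℝ) + 2) * ‖u‖ ^ 2 * m ^ ((2 + (d : ℝ)) * J) := by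
  have hπ : (0:ℝ) < π := Real.pi_pos
  have hm0 : (0:ℝ) < m := lt_trans one_pos hm
  set R : ℝ := m ^ J with hRdef
  have hd1 : (1:ℝ) ≤ Real.sqrt d := by
    rw [show (1:ℝ) = Real.sqrt 1 by simp]
    exact Real.sqrt_le_sqrt (by exact_mod_cast hd)
  have hR1 : (1:ℝ) ≤ R := le_trans hd1 hJ
  have hR0 : (0:ℝ) < R := lt_of_lt_of_le one_pos hR1
  set N : ℤ := ⌊R⌋ with hNdef
  have hNle : (N:ℝ) ≤ R := Int.floor_le R
  have hN1 : 1 ≤ N := Int.le_floor.mpr (by exact_mod_cast hR1)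
  set T : (Fin d → ℤ) → ℝ := fun j => ∫ ξ in cube d,
      (1 + ‖ξ + (2 * π) • latt d j‖ ^ 2) ^ (-s) *
        ‖(1 : ℂ) - Complex.exp (Complex.I * (dotp u (ξ + (2 * π) • latt d j) : ℂ))‖ ^ 2
    with hTdef
  set B : ℝ := (‖u‖ * (4*π*R))^2 * (2*π)^d with hBdef
  have hB0 : 0 ≤ B := by positivity
  set S : Finset (Fin d → ℤ) := Fintype.piFinset fun _ => Finset.Icc (-N) N with hSdef
  have hsub : ∀ j : Fin d → ℤ, ‖latt d j‖ < R → j ∈ S := by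
    intro j hj
    rw [hSdef, Fintype.mem_piFinset]
    intro i
    rw [Finset.mem_Icc]
    have hco : |((j i : ℝ))| ≤ R := le_of_lt (lt_of_le_of_lt (aux_coord_le (latt d j) i) hj)
    rw [abs_le] at hco
    constructor
    · rw [neg_le]
      exact Int.le_floor.mpr (by push_cast; linarith [hco.1])
    · exact Int.le_floor.mpr (by exact_mod_cast hco.2)
  have h0 : (∑' j : {j : Fin d → ℤ // ‖latt d j‖ < m ^ J}, T j.1)
      = ∑' j : (Fin d → ℤ), Set.indicator {j : Fin d → ℤ | ‖latt d j‖ < m ^ J} T j :=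
    tsum_subtype _ _
  have h1 : (∑' j : (Fin d → ℤ), Set.indicator {j : Fin d → ℤ | ‖latt d j‖ < m ^ J} T j)
      = ∑ j ∈ S, Set.indicator {j : Fin d → ℤ | ‖latt d j‖ < m ^ J} T j := by
    refine tsum_eq_sum (fun j hj => ?_)
    have hnm : j ∉ {j : Fin d → ℤ | ‖latt d j‖ < m ^ J} := fun hmem => hj (hsub j hmem)
    exact Set.indicator_of_notMem hnm T
  have hcard : (S.card : ℝ) ≤ (3*R)^d := by
    have hc : S.card = ((2*N+1).toNat)^d := by
      rw [hSdef, Fintype.card_piFinset]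
      simp only [Int.card_Icc, Finset.prod_const, Finset.card_univ, Fintype.card_fin]
      congr 2
      omega
    have h2N : ((((2*N+1).toNat : ℕ)) : ℝ) ≤ 3*R := by
      have ht : (((2*N+1).toNat : ℕ) : ℤ) = 2*N+1 := Int.toNat_of_nonneg (by omega)
      have ht2 : ((((2*N+1).toNat : ℕ)) : ℝ) = 2*(N:ℝ)+1 := by
        exact_mod_cast congrArg (Int.cast : ℤ → ℝ) ht
      rw [ht2]; linarith
    rw [hc]
    push_cast
    exact pow_le_pow_left₀ (by positivity) h2N d
  have hfinal : (S.card : ℝ) * B ≤ 4 * (2 * π) ^ (2 * (d:ℝ) + 2) * ‖u‖ ^ 2 * m ^ ((2 + (d:ℝ)) * J) := by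
    have e1 : (2*π:ℝ) ^ (2*(d:ℝ)+2) = (2*π:ℝ)^(2*d+2 : ℕ) := by
      rw [show (2*(d:ℝ)+2) = ((2*d+2 : ℕ) : ℝ) by push_cast; ring, Real.rpow_natCast]
    have e2 : m ^ ((2 + (d:ℝ)) * J) = R ^ (d+2 : ℕ) := by
      rw [show (2 + (d:ℝ)) * J = J * ((d+2 : ℕ) : ℝ) by push_cast; ring,
        Real.rpow_mul (le_of_lt hm0), Real.rpow_natCast]
    rw [e1, e2]
    have key : (3:ℝ)^d * (16*π^2) * (2*π)^d ≤ 4 * (2*π)^(2*d+2 : ℕ) := by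
      have h4 : (4:ℝ) * (2*π)^(2*d+2 : ℕ) = ((2*π)^d * (16*π^2)) * (2*π)^d := by
        rw [show 2*d+2 = d+(d+2) by ring, pow_add, pow_add]
        ring
      rw [h4]
      have h3 : (3:ℝ)^d ≤ (2*π)^d :=
        pow_le_pow_left₀ (by norm_num) (by nlinarith [Real.pi_gt_three]) d
      exact mul_le_mul_of_nonneg_right
        (mul_le_mul_of_nonneg_right h3 (by positivity)) (by positivity)
    calc (S.card : ℝ) * B ≤ (3*R)^d * B := mul_le_mul_of_nonneg_right hcard hB0
      _ = ((3:ℝ)^d * (16*π^2) * (2*π)^d) * (‖u‖^2 * (R^d * R^2)) := by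
          rw [hBdef]; ring
      _ ≤ (4 * (2*π)^(2*d+2 : ℕ)) * (‖u‖^2 * (R^d * R^2)) :=
          mul_le_mul_of_nonneg_right key (by positivity)
      _ = 4 * (2*π)^(2*d+2 : ℕ) * ‖u‖^2 * R^(d+2) := by
          rw [pow_add]; ring
  calc (∑' j : {j : Fin d → ℤ // ‖latt d j‖ < m ^ J}, T j.1)
      = ∑ j ∈ S, Set.indicator {j : Fin d → ℤ | ‖latt d j‖ < m ^ J} T j := by rw [h0, h1]
    _ ≤ ∑ _j ∈ S, B := by
        apply Finset.sum_le_sum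
        intro j _
        by_cases hmem : j ∈ {j : Fin d → ℤ | ‖latt d j‖ < m ^ J}
        · rw [Set.indicator_of_mem hmem]
          exact aux_term_bound s hs u R hJ j hmem
        · rw [Set.indicator_of_notMem hmem]
          exact hB0
    _ = (S.card : ℝ) * B := by rw [Finset.sum_const, nsmul_eq_mul]
    _ ≤ 4 * (2 * π) ^ (2 * (d:ℝ) + 2) * ‖u‖ ^ 2 * m ^ ((2 + (d:ℝ)) * J) := hfinal

end
end

section
/- Let d ≥ 1, s > d/2, 0 < α < min{2s−d, 2}, and let M be a d×d integer matrix with m := |det M|^{1/d} > 1 satisfying ‖(M^T)^{-1}x‖₂ = m^{-1}‖x‖₂ for all x ∈ ℝ^d. Let φ̃ ∈ H^{-s}(ℝ^d) with ‖φ̃̂‖_{L^∞} < ∞. Then there exists a constant C = C(d,s,α) > 0 such that for every f ∈ H^s(ℝ^d), every integer N ≥ ((2s+2−α)/(2−α)) log_m d, every k ∈ ℤ^d and every θ ∈ ℝ^d: |⟨f, m^{Nd/2} φ̃(M^N·−k) − m^{Nd/2} φ̃(M^N·−k−θ)⟩|² ≤ C m^{-Nd} ‖f‖²_{H^s} ‖φ̃̂‖²_{L^∞}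 (‖θ‖₂^α + ‖θ‖₂²) m^{-N(4s+(α−2)d)/(2s−α+2)}. -/
open MeasureTheory Real Filter Matrix
open scoped BigOperators

noncomputable section

namespace SCPaux

section helpers

lemma mvec_mvec {d : ℕ} (A B : Matrix (Fin d) (Fin d) ℝ) (x : Rd d) :
    mvec A (mvec B x) = mvec (A * B) x := by
  ext i
  simp [mvec, Matrix.mulVec_mulVec]

lemma mvec_add {d : ℕ} (A : Matrix (Fin d) (Fin d) ℝ) (x y : Rd d) :
    mvec A (x + y) = mvec A x + mvec A y := by
  ext i
  show (A *ᵥ fun j => (x + y) j) i = _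
  have h : (fun j => (x + y) j) = (fun j => x j) + fun j => y j := rfl
  rw [h, Matrix.mulVec_add]
  rfl

lemma dotp_mvec {d : ℕ} (A : Matrix (Fin d) (Fin d) ℝ) (x y : Rd d) :
    dotp (mvec A x) y = dotp x (mvec Aᵀ y) := by
  simp only [dotp, mvec, PiLp.inner_apply, RCLike.inner_apply, conj_trivial,
    Matrix.mulVec, dotProduct, Matrix.transpose_apply, PiLp.toLp_apply]
  simp_rw [Finset.sum_mul]
  rw [Finset.sum_comm]
  refine Finset.sum_congr rfl fun j _ => ?_
  rw [Finset.mul_sum]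
  refine Finset.sum_congr rfl fun i _ => by ring

lemma dotp_add_left {d : ℕ} (x y z : Rd d) : dotp (x + y) z = dotp x z + dotp y z := by
  simp [dotp, inner_add_left]

lemma abs_dotp_le {d : ℕ} (x y : Rd d) : |dotp x y| ≤ ‖x‖ * ‖y‖ :=
  abs_real_inner_le_norm x y

lemma dotp_neg_left {d : ℕ} (x y : Rd d) : dotp (-x) y = -dotp x y := by
  simp [dotp, inner_neg_left]

lemma amgm_half (a b : ℝ) : a * b ≤ (a ^ 2 + b ^ 2) / 2 := by
  nlinarith [sq_nonneg (a - b)]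

lemma arith_num {d s α : ℝ} (hd1 : 1 ≤ d) (hs : d / 2 < s) (hα0 : 0 < α) :
    0 < 4 * s + (α - 2) * d := by
  nlinarith [mul_pos hα0 (lt_of_lt_of_le one_pos hd1)]

lemma arith_beta2 {d s α : ℝ} (hd1 : 1 ≤ d) (hs : d / 2 < s) (hα0 : 0 < α) (hα2 : α < 2) :
    4 * s + (α - 2) * d < 2 * (2 * s - α + 2) := by
  nlinarith [mul_le_mul_of_nonneg_left hd1 (by linarith : (0:ℝ) ≤ 2 - α)]

lemma arith_betas {d s α : ℝ} (hd1 : 1 ≤ d) (hs : d / 2 < s) (hα0 : 0 < α) (hα2 : α < 2)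
    (hαs : α < 2 * s - d) :
    4 * s + (α - 2) * d < (2 * s - d) * (2 * s - α + 2) := by
  have hs0 : 0 < s := by linarith
  nlinarith [mul_lt_mul_of_pos_left hαs (show (0:ℝ) < 2 * s by linarith)]

lemma norm_one_sub_exp_le {γ : ℝ} (hγ0 : 0 < γ) (hγ1 : γ ≤ 1) (t : ℝ) :
    ‖1 - Complex.exp (Complex.I * t)‖ ≤ 2 * |t| ^ γ := by
  rcases eq_or_ne t 0 with rfl | ht
  · simp [Real.rpow_nonneg]
  have habs : (0:ℝ) < |t| := abs_pos.2 ht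
  rcases le_or_gt |t| 1 with h1 | h1
  · have h2 : ‖1 - Complex.exp (Complex.I * t)‖ ≤ 2 * |t| := by
      rw [norm_sub_rev]
      have := Complex.norm_exp_sub_one_le (x := Complex.I * t) (by simpa using h1)
      simpa using this
    refine h2.trans ?_
    have h3 : |t| ^ (1:ℝ) ≤ |t| ^ γ := Real.rpow_le_rpow_of_exponent_ge habs h1 hγ1
    rw [Real.rpow_one] at h3
    linarith
  · have h2 : ‖1 - Complex.exp (Complex.I * t)‖ ≤ 2 := by
      calc ‖1 - Complex.exp (Complex.I * t)‖ ≤ ‖(1:ℂ)‖ + ‖Complex.exp (Complex.I * t)‖ :=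
        norm_sub_le _ _
      _ = 2 := by rw [mul_comm Complex.I, Complex.norm_exp_ofReal_mul_I]; norm_num
    refine h2.trans ?_
    have h3 : (1:ℝ) ≤ |t| ^ γ := Real.one_le_rpow h1.le hγ0.le
    linarith

lemma sq_rpow {y : ℝ} (hy : 0 ≤ y) (t : ℝ) : (y ^ t) ^ 2 = y ^ (2 * t) := by
  rw [← Real.rpow_natCast (y ^ t) 2, ← Real.rpow_mul hy]
  norm_num
  ring_nf


lemma norm_mvec_pow {d : ℕ} {M : Matrix (Fin d) (Fin d) ℝ} {c : ℝ}
    (hT : ∀ x : Rd d, ‖mvec M x‖ = c * ‖x‖) (n : ℕ) (x : Rd d) :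
    ‖mvec (M ^ n) x‖ = c ^ n * ‖x‖ := by
  induction n with
  | zero =>
      have h : mvec (M ^ 0) x = x := by
        ext i; simp [mvec, Matrix.one_mulVec]
      rw [h]; simp
  | succ n ih =>
      have h : mvec (M ^ (n + 1)) x = mvec M (mvec (M ^ n) x) := by
        rw [mvec_mvec, ← pow_succ']
      rw [h, hT, ih, pow_succ']
      ring

end helpers

end SCPaux

open SCPaux in
set_option maxHeartbeats 8000000 in
/-- Perturbation estimate for a single sampling coefficient. -/
theorem single_coefficient_perturbation
    (d : ℕ) (hd : 1 ≤ d) (s : ℝ) (hs : (d : ℝ) / 2 < s)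
    (α : ℝ) (hα0 : 0 < α) (hα : α < min (2 * s - d) 2) :
    ∃ C > (0 : ℝ),
      ∀ (M : Matrix (Fin d) (Fin d) ℤ) (m : ℝ),
        m = |(toR M).det| ^ ((1 : ℝ) / d) → 1 < m →
        (∀ x : Rd d, ‖mvec (((toR M)ᵀ)⁻¹) x‖ = m⁻¹ * ‖x‖) →
        ∀ φth : Rd d → ℂ, MemSob (-s) φth →
        ∀ B : ℝ, (∀ ξ : Rd d, ‖φth ξ‖ ≤ B) →
        ∀ fh : Rd d → ℂ, MemSob s fh →
        ∀ N : ℕ, (2 * s + 2 - α) / (2 - α) * Real.logb m d ≤ N →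
        ∀ (k : Fin d → ℤ) (θ : Rd d),
          ‖coefD M m φth fh N k 0 - coefD M m φth fh N k θ‖ ^ 2 ≤
            C * m ^ (-((N : ℝ) * d)) * sobSq s fh * B ^ 2 * (‖θ‖ ^ α + ‖θ‖ ^ 2) *
              m ^ (-(N : ℝ) * (4 * s + (α - 2) * d) / (2 * s - α + 2)) := by
  classical
  -- basic exponent facts
  have hα2 : α < 2 := hα.trans_le (min_le_right _ _)
  have hαs : α < 2 * s - d := hα.trans_le (min_le_left _ _)
  have hd1 : (1:ℝ) ≤ (d:ℝ) := by exact_mod_cast hd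
  have hs0 : (0:ℝ) < s := lt_of_le_of_lt (by positivity) hs
  have hds : (d:ℝ) < 2 * s := by linarith
  set β : ℝ := (4 * s + (α - 2) * (d:ℝ)) / (2 * s - α + 2) with hβdef
  clear_value β
  have hden : (0:ℝ) < 2 * s - α + 2 := by linarith
  have hnum : (0:ℝ) < 4 * s + (α - 2) * (d:ℝ) := arith_num hd1 hs hα0
  have hβpos : 0 < β := by rw [hβdef]; exact div_pos hnum hden
  have hβ2 : β < 2 := by
    rw [hβdef, div_lt_iff₀ hden]; exact arith_beta2 hd1 hs hα0 hα2
  have hβs : β < 2 * s - d := by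
    rw [hβdef, div_lt_iff₀ hden]; exact arith_betas hd1 hs hα0 hα2 hαs
  set γ : ℝ := max α β / 2 with hγdef
  clear_value γ
  have hγpos : 0 < γ := by
    have h : 0 < max α β := lt_max_of_lt_left hα0
    rw [hγdef]; positivity
  have h2γ : 2 * γ = max α β := by rw [hγdef]; ring
  have hαγ : α ≤ 2 * γ := by rw [h2γ]; exact le_max_left _ _
  have hβγ : β ≤ 2 * γ := by rw [h2γ]; exact le_max_right _ _
  have h2γ2 : 2 * γ ≤ 2 := by rw [h2γ]; exact max_le hα2.le hβ2.le
  have hγ1 : γ ≤ 1 := by linarith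
  have h2γs : 2 * γ < 2 * s - d := by rw [h2γ]; exact max_lt hαs hβs
  -- the weight ‖ξ‖^(2γ) (1+‖ξ‖²)^(-s) is integrable
  have hfr : (Module.finrank ℝ (Rd d) : ℝ) < 2 * s - 2 * γ := by
    rw [finrank_euclideanSpace, Fintype.card_fin]; linarith
  have hGm : Measurable (fun ξ : Rd d => ‖ξ‖ ^ (2*γ) * (1 + ‖ξ‖ ^ 2) ^ (-s)) := by
    fun_prop
  have hGint : Integrable (fun ξ : Rd d => ‖ξ‖ ^ (2*γ) * (1 + ‖ξ‖ ^ 2) ^ (-s)) := by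
    refine (integrable_rpow_neg_one_add_norm_sq (μ := volume) hfr).mono'
      hGm.aestronglyMeasurable (Eventually.of_forall fun ξ => ?_)
    have h1 : (0:ℝ) < 1 + ‖ξ‖ ^ 2 := by positivity
    rw [Real.norm_of_nonneg (by positivity)]
    have hb : ‖ξ‖ ^ (2*γ) ≤ (1 + ‖ξ‖ ^ 2) ^ γ := by
      have h2 : ‖ξ‖ ^ (2*γ) = (‖ξ‖ ^ 2 : ℝ) ^ γ := by
        rw [← Real.rpow_natCast ‖ξ‖ 2, ← Real.rpow_mul (norm_nonneg ξ)]
        norm_num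
      rw [h2]
      exact Real.rpow_le_rpow (by positivity) (by linarith) hγpos.le
    calc ‖ξ‖ ^ (2*γ) * (1 + ‖ξ‖ ^ 2) ^ (-s)
        ≤ (1 + ‖ξ‖ ^ 2) ^ γ * (1 + ‖ξ‖ ^ 2) ^ (-s) :=
          mul_le_mul_of_nonneg_right hb (Real.rpow_nonneg h1.le _)
      _ = (1 + ‖ξ‖ ^ 2) ^ (-(2 * s - 2 * γ) / 2) := by
          rw [← Real.rpow_add h1]; ring_nf
  set D : ℝ := ∫ ξ : Rd d, ‖ξ‖ ^ (2*γ) * (1 + ‖ξ‖ ^ 2) ^ (-s) with hDdef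
  clear_value D
  have hD0 : 0 ≤ D := by
    rw [hDdef]; exact integral_nonneg fun ξ => by positivity
  have hπ : (0:ℝ) < 2 * π := by positivity
  refine ⟨(2*π) ^ (-(d:ℝ)) * 4 * D + 1, by positivity, ?_⟩
  intro M m _hmdet hm1 hM φth _hφt B hB fh hf N _hN k θ
  have hm0 : (0:ℝ) < m := lt_trans one_pos hm1
  have hminv : (0:ℝ) ≤ m⁻¹ ^ N := by positivity
  have hB0 : 0 ≤ B := le_trans (norm_nonneg _) (hB 0)
  set A' : ℝ := ∫ ξ : Rd d, ‖fh ξ‖ ^ 2 * (1 + ‖ξ‖ ^ 2) ^ s with hA'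
  clear_value A'
  have hA0 : 0 ≤ A' := by
    rw [hA']; exact integral_nonneg fun ξ => by positivity
  have hFint : Integrable (fun ξ : Rd d => ‖fh ξ‖ ^ 2 * (1 + ‖ξ‖ ^ 2) ^ s) := hf
  have hsob : sobSq s fh = (2*π) ^ (-(d:ℝ)) * A' := by
    rw [sobSq, hA']
  -- a.e. measurability of ‖fh‖
  have hfhm : AEMeasurable (fun ξ : Rd d => ‖fh ξ‖) := by
    have h1 : AEMeasurable (fun ξ : Rd d => ‖fh ξ‖ ^ 2 * (1 + ‖ξ‖ ^ 2) ^ s) :=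
      hFint.aemeasurable
    have h2 : (fun ξ : Rd d => ‖fh ξ‖)
        = fun ξ => Real.sqrt ((‖fh ξ‖ ^ 2 * (1 + ‖ξ‖ ^ 2) ^ s) * (1 + ‖ξ‖ ^ 2) ^ (-s)) := by
      funext ξ
      have hp : (0:ℝ) < 1 + ‖ξ‖ ^ 2 := by positivity
      rw [mul_assoc, ← Real.rpow_add hp]
      simp [Real.sqrt_sq_eq_abs]
    rw [h2]
    exact (Real.continuous_sqrt.measurable.comp_aemeasurable
      (h1.mul ((by fun_prop : Measurable fun ξ : Rd d => (1 + ‖ξ‖ ^ 2) ^ (-s)).aemeasurable)))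
  -- Cauchy–Schwarz setup
  set u : Rd d → ℝ := fun ξ => ‖fh ξ‖ * (1 + ‖ξ‖ ^ 2) ^ (s/2) with hudef
  clear_value u
  set v : Rd d → ℝ := fun ξ => ‖ξ‖ ^ γ * (1 + ‖ξ‖ ^ 2) ^ (-(s/2)) with hvdef
  clear_value v
  set W : Rd d → ℝ := fun ξ => ‖fh ξ‖ * ‖ξ‖ ^ γ with hWdef
  clear_value W
  have hu2 : ∀ ξ, u ξ ^ 2 = ‖fh ξ‖ ^ 2 * (1 + ‖ξ‖ ^ 2) ^ s := by
    intro ξ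
    have hp : (0:ℝ) ≤ 1 + ‖ξ‖ ^ 2 := by positivity
    rw [hudef, mul_pow, sq_rpow hp, show 2 * (s/2) = s by ring]
  have hv2 : ∀ ξ, v ξ ^ 2 = ‖ξ‖ ^ (2*γ) * (1 + ‖ξ‖ ^ 2) ^ (-s) := by
    intro ξ
    have hp : (0:ℝ) ≤ 1 + ‖ξ‖ ^ 2 := by positivity
    rw [hvdef, mul_pow, sq_rpow hp, sq_rpow (norm_nonneg ξ), show 2 * (-(s/2)) = -s by ring]
  have huv : ∀ ξ, u ξ * v ξ = W ξ := by
    intro ξ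
    have hp : (0:ℝ) < 1 + ‖ξ‖ ^ 2 := by positivity
    rw [hudef, hvdef, hWdef]
    rw [show ‖fh ξ‖ * (1 + ‖ξ‖ ^ 2) ^ (s/2) * (‖ξ‖ ^ γ * (1 + ‖ξ‖ ^ 2) ^ (-(s/2)))
        = ‖fh ξ‖ * ‖ξ‖ ^ γ * ((1 + ‖ξ‖ ^ 2) ^ (s/2) * (1 + ‖ξ‖ ^ 2) ^ (-(s/2))) by ring,
      ← Real.rpow_add hp]
    simp
  have hum : AEMeasurable u := by
    rw [hudef]
    exact hfhm.mul ((by fun_prop : Measurable fun ξ : Rd d => (1 + ‖ξ‖ ^ 2) ^ (s/2)).aemeasurable)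
  have hvm : Measurable v := by
    rw [hvdef]; fun_prop
  have hWm : AEMeasurable W := by
    rw [hWdef]
    exact hfhm.mul ((by fun_prop : Measurable fun ξ : Rd d => ‖ξ‖ ^ γ).aemeasurable)
  have hWnn : ∀ ξ, 0 ≤ W ξ := fun ξ => by rw [hWdef]; positivity
  have hWint : Integrable W := by
    refine ((hFint.add hGint).div_const 2).mono' hWm.aestronglyMeasurable
      (Eventually.of_forall fun ξ => ?_)
    rw [Real.norm_of_nonneg (hWnn ξ)]
    simp only [Pi.add_apply]
    rw [← hu2 ξ, ← hv2 ξ, ← huv ξ]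
    exact amgm_half _ _
  have hCS : ∫ ξ, W ξ ≤ A' ^ (1/2:ℝ) * D ^ (1/2:ℝ) := by
    have hpq : Real.HolderConjugate 2 2 := Real.HolderConjugate.two_two
    have hrpow2 : ∀ x:ℝ, x ^ (2:ℝ) = x ^ 2 := fun x => by
      rw [show (2:ℝ) = ((2:ℕ):ℝ) by norm_num, Real.rpow_natCast]
    have hMu : MemLp u (ENNReal.ofReal 2) := by
      rw [show ENNReal.ofReal 2 = 2 by simp]
      refine (memLp_two_iff_integrable_sq hum.aestronglyMeasurable).2 ?_
      have : (fun ξ => u ξ ^ 2) = fun ξ : Rd d => ‖fh ξ‖ ^ 2 * (1 + ‖ξ‖ ^ 2) ^ s :=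
        funext hu2
      rw [this]; exact hFint
    have hMv : MemLp v (ENNReal.ofReal 2) := by
      rw [show ENNReal.ofReal 2 = 2 by simp]
      refine (memLp_two_iff_integrable_sq hvm.aestronglyMeasurable).2 ?_
      have : (fun ξ => v ξ ^ 2) = fun ξ : Rd d => ‖ξ‖ ^ (2*γ) * (1 + ‖ξ‖ ^ 2) ^ (-s) :=
        funext hv2
      rw [this]; exact hGint
    have h := integral_mul_le_Lp_mul_Lq_of_nonneg hpq
      (Eventually.of_forall fun ξ => by rw [hudef]; positivity)
      (Eventually.of_forall fun ξ => by rw [hvdef]; positivity) hMu hMv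
    calc ∫ ξ, W ξ = ∫ ξ, u ξ * v ξ := by
          refine integral_congr_ae (Eventually.of_forall fun ξ => (huv ξ).symm)
      _ ≤ (∫ ξ, u ξ ^ (2:ℝ)) ^ (1/(2:ℝ)) * (∫ ξ, v ξ ^ (2:ℝ)) ^ (1/(2:ℝ)) := h
      _ = A' ^ (1/2:ℝ) * D ^ (1/2:ℝ) := by
          congr 1
          · congr 1
            rw [hA']
            refine integral_congr_ae (Eventually.of_forall fun ξ => ?_)
            show u ξ ^ (2:ℝ) = ‖fh ξ‖ ^ 2 * (1 + ‖ξ‖ ^ 2) ^ s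
            rw [hrpow2, hu2]
          · congr 1
            rw [hDdef]
            refine integral_congr_ae (Eventually.of_forall fun ξ => ?_)
            show v ξ ^ (2:ℝ) = ‖ξ‖ ^ (2*γ) * (1 + ‖ξ‖ ^ 2) ^ (-s)
            rw [hrpow2, hv2]
  -- the coefficient difference
  set c : ℝ := (2 * π) ^ (-(d : ℝ)) * m ^ (-((N : ℝ) * (d : ℝ) / 2)) with hc
  clear_value c
  have hc0 : 0 ≤ c := by rw [hc]; positivity
  set K : ℝ := B * (2 * (‖θ‖ ^ γ * (m⁻¹ ^ N) ^ γ)) with hK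
  clear_value K
  have hK0 : 0 ≤ K := by
    rw [hK]
    have := Real.rpow_nonneg (norm_nonneg θ) γ
    have := Real.rpow_nonneg hminv γ
    positivity
  set g : Rd d → Rd d → ℂ := fun w ξ =>
    fh ξ * (starRingEnd ℂ) (φth (mvec ((((toR M)ᵀ)⁻¹) ^ N) ξ)) *
      Complex.exp (Complex.I * ((dotp (mvec ((toR M)⁻¹ ^ N) (latt d k + w)) ξ : ℝ) : ℂ))
    with hgdef
  clear_value g
  have hcoefD : ∀ w : Rd d, coefD M m φth fh N k w = ((c:ℝ):ℂ) * ∫ ξ, g w ξ := by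
    intro w
    simp only [coefD, hgdef, hc]
  -- phase splitting
  have hsplit : ∀ ξ : Rd d, dotp (mvec ((toR M)⁻¹ ^ N) (latt d k + θ)) ξ
      = dotp (mvec ((toR M)⁻¹ ^ N) (latt d k + 0)) ξ + dotp (mvec ((toR M)⁻¹ ^ N) θ) ξ := by
    intro ξ
    rw [add_zero, ← dotp_add_left, ← mvec_add]
  have hub : ∀ ξ : Rd d, |dotp (mvec ((toR M)⁻¹ ^ N) θ) ξ| ≤ ‖θ‖ * (m⁻¹ ^ N * ‖ξ‖) := by
    intro ξ
    rw [dotp_mvec]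
    have htr : (((toR M)⁻¹ ^ N)ᵀ) = (((toR M)ᵀ)⁻¹) ^ N := by
      rw [Matrix.transpose_pow, Matrix.transpose_nonsing_inv]
    rw [htr]
    calc |dotp θ (mvec ((((toR M)ᵀ)⁻¹) ^ N) ξ)|
        ≤ ‖θ‖ * ‖mvec ((((toR M)ᵀ)⁻¹) ^ N) ξ‖ := abs_dotp_le _ _
      _ = ‖θ‖ * (m⁻¹ ^ N * ‖ξ‖) := by rw [norm_mvec_pow hM]
  have hpt : ∀ ξ : Rd d, ‖g 0 ξ - g θ ξ‖ ≤ K * W ξ := by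
    intro ξ
    have hfac : g 0 ξ - g θ ξ = g 0 ξ *
        (1 - Complex.exp (Complex.I * ((dotp (mvec ((toR M)⁻¹ ^ N) θ) ξ : ℝ) : ℂ))) := by
      simp only [hgdef]
      rw [hsplit ξ, Complex.ofReal_add, mul_add, Complex.exp_add]
      ring
    rw [hfac, norm_mul]
    have hg0n : ‖g 0 ξ‖ ≤ ‖fh ξ‖ * B := by
      simp only [hgdef, norm_mul]
      rw [mul_comm Complex.I, Complex.norm_exp_ofReal_mul_I, mul_one, RCLike.norm_conj]
      exact mul_le_mul_of_nonneg_left (hB _) (norm_nonneg _)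
    have hphase : ‖1 - Complex.exp (Complex.I * ((dotp (mvec ((toR M)⁻¹ ^ N) θ) ξ : ℝ) : ℂ))‖
        ≤ 2 * (‖θ‖ ^ γ * ((m⁻¹ ^ N) ^ γ * ‖ξ‖ ^ γ)) := by
      refine (norm_one_sub_exp_le hγpos hγ1 _).trans ?_
      have h2 : |dotp (mvec ((toR M)⁻¹ ^ N) θ) ξ| ^ γ ≤ (‖θ‖ * (m⁻¹ ^ N * ‖ξ‖)) ^ γ :=
        Real.rpow_le_rpow (abs_nonneg _) (hub ξ) hγpos.le
      have h3 : (‖θ‖ * (m⁻¹ ^ N * ‖ξ‖)) ^ γ = ‖θ‖ ^ γ * ((m⁻¹ ^ N) ^ γ * ‖ξ‖ ^ γ) := by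
        rw [Real.mul_rpow (norm_nonneg _) (by positivity),
          Real.mul_rpow hminv (norm_nonneg _)]
      linarith [h2, h3.le, h3.ge]
    calc ‖g 0 ξ‖ * ‖1 - Complex.exp (Complex.I * ((dotp (mvec ((toR M)⁻¹ ^ N) θ) ξ : ℝ) : ℂ))‖
        ≤ (‖fh ξ‖ * B) * (2 * (‖θ‖ ^ γ * ((m⁻¹ ^ N) ^ γ * ‖ξ‖ ^ γ))) :=
          mul_le_mul hg0n hphase (norm_nonneg _) (mul_nonneg (norm_nonneg _) hB0)
      _ = K * W ξ := by rw [hK, hWdef]; ring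
  have hcont : ∀ w : Rd d,
      Continuous fun ξ : Rd d => Complex.exp (Complex.I * ((dotp w ξ : ℝ) : ℂ)) := by
    intro w
    have h1 : Continuous fun ξ : Rd d => dotp w ξ := continuous_const.inner continuous_id
    exact Complex.continuous_exp.comp (continuous_const.mul (Complex.continuous_ofReal.comp h1))
  have hg1eq : g θ = fun ξ =>
      Complex.exp (Complex.I * ((dotp (mvec ((toR M)⁻¹ ^ N) θ) ξ : ℝ) : ℂ)) * g 0 ξ := by
    funext ξ
    simp only [hgdef]
    rw [hsplit ξ, Complex.ofReal_add, mul_add, Complex.exp_add]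
    ring
  have hmain : ‖coefD M m φth fh N k 0 - coefD M m φth fh N k θ‖
      ≤ c * (K * (A' ^ (1/2:ℝ) * D ^ (1/2:ℝ))) := by
    rw [hcoefD 0, hcoefD θ, ← mul_sub, norm_mul, Complex.norm_real, Real.norm_eq_abs,
      abs_of_nonneg hc0]
    refine mul_le_mul_of_nonneg_left ?_ hc0
    by_cases hI0 : Integrable (g 0)
    · have hI1 : Integrable (g θ) := by
        rw [hg1eq]
        exact hI0.bdd_mul (c := 1) ((hcont _).aestronglyMeasurable)
          (Eventually.of_forall fun ξ => by rw [mul_comm Complex.I, Complex.norm_exp_ofReal_mul_I])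
      rw [← integral_sub hI0 hI1]
      calc ‖∫ ξ, (g 0 ξ - g θ ξ)‖ ≤ ∫ ξ, ‖g 0 ξ - g θ ξ‖ := norm_integral_le_integral_norm _
        _ ≤ ∫ ξ, K * W ξ := integral_mono_of_nonneg
              (Eventually.of_forall fun ξ => norm_nonneg _)
              (hWint.const_mul K) (Eventually.of_forall hpt)
        _ = K * ∫ ξ, W ξ := integral_const_mul K W
        _ ≤ K * (A' ^ (1/2:ℝ) * D ^ (1/2:ℝ)) := mul_le_mul_of_nonneg_left hCS hK0
    · have hI1 : ¬ Integrable (g θ) := by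
        intro hI1
        apply hI0
        have hg0eq : g 0 = fun ξ =>
            Complex.exp (Complex.I * ((dotp (-(mvec ((toR M)⁻¹ ^ N) θ)) ξ : ℝ) : ℂ)) * g θ ξ := by
          funext ξ
          rw [hg1eq, dotp_neg_left, Complex.ofReal_neg]
          rw [show Complex.exp (Complex.I * -((dotp (mvec ((toR M)⁻¹ ^ N) θ) ξ : ℝ) : ℂ)) *
              (Complex.exp (Complex.I * ((dotp (mvec ((toR M)⁻¹ ^ N) θ) ξ : ℝ) : ℂ)) * g 0 ξ)
            = Complex.exp (Complex.I * -((dotp (mvec ((toR M)⁻¹ ^ N) θ) ξ : ℝ) : ℂ) +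
                Complex.I * ((dotp (mvec ((toR M)⁻¹ ^ N) θ) ξ : ℝ) : ℂ)) * g 0 ξ from by
              rw [Complex.exp_add]; ring]
          rw [show Complex.I * -((dotp (mvec ((toR M)⁻¹ ^ N) θ) ξ : ℝ) : ℂ) +
              Complex.I * ((dotp (mvec ((toR M)⁻¹ ^ N) θ) ξ : ℝ) : ℂ) = 0 from by ring]
          rw [Complex.exp_zero, one_mul]
        rw [hg0eq]
        exact hI1.bdd_mul (c := 1) ((hcont _).aestronglyMeasurable)
          (Eventually.of_forall fun ξ => by rw [mul_comm Complex.I, Complex.norm_exp_ofReal_mul_I])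
      rw [integral_undef hI0, integral_undef hI1, sub_zero, norm_zero]
      have h1 : (0:ℝ) ≤ A' ^ (1/2:ℝ) := Real.rpow_nonneg hA0 _
      have h2 : (0:ℝ) ≤ D ^ (1/2:ℝ) := Real.rpow_nonneg hD0 _
      positivity
  -- final numeric assembly
  have hsq2 : ∀ x:ℝ, 0 ≤ x → (x ^ (1/2:ℝ))^2 = x := by
    intro x hx
    rw [sq_rpow hx, show (2 * (1/2:ℝ)) = 1 by norm_num, Real.rpow_one]
  have hc2 : c ^ 2 = (2*π) ^ (-(d:ℝ)) * (2*π) ^ (-(d:ℝ)) * m ^ (-((N:ℝ)*(d:ℝ))) := by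
    rw [hc, mul_pow, sq_rpow hπ.le, sq_rpow hm0.le,
      show (2:ℝ) * (-(d:ℝ)) = -(d:ℝ) + -(d:ℝ) by ring, Real.rpow_add hπ]
    congr 2
    ring
  have hK2 : K ^ 2 = B ^ 2 * (4 * (‖θ‖ ^ (2*γ) * ((m⁻¹ ^ N : ℝ)) ^ (2*γ))) := by
    have h1 := sq_rpow (norm_nonneg θ) γ
    have h2 := sq_rpow hminv γ
    rw [hK]
    calc (B * (2 * (‖θ‖ ^ γ * (m⁻¹ ^ N) ^ γ)))^2
        = B^2 * (4 * ((‖θ‖ ^ γ)^2 * ((m⁻¹ ^ N) ^ γ)^2)) := by ring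
      _ = _ := by rw [h1, h2]
  have hθbound : ‖θ‖ ^ (2*γ) ≤ ‖θ‖ ^ α + ‖θ‖ ^ 2 := by
    have h4 : 0 ≤ ‖θ‖ ^ α := Real.rpow_nonneg (norm_nonneg θ) α
    rcases eq_or_ne ‖θ‖ 0 with h0 | h0
    · rw [h0, Real.zero_rpow (by positivity)]
      positivity
    have hpos : 0 < ‖θ‖ := (norm_nonneg θ).lt_of_ne (Ne.symm h0)
    rcases le_or_gt ‖θ‖ 1 with h1 | h1
    · have h2 := Real.rpow_le_rpow_of_exponent_ge hpos h1 hαγ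
      exact le_trans h2 (le_add_of_nonneg_right (sq_nonneg _))
    · have h2 : ‖θ‖ ^ (2*γ) ≤ ‖θ‖ ^ (2:ℝ) := Real.rpow_le_rpow_of_exponent_le h1.le h2γ2
      have h3 : ‖θ‖ ^ (2:ℝ) = ‖θ‖ ^ 2 := by
        rw [show (2:ℝ) = ((2:ℕ):ℝ) by norm_num, Real.rpow_natCast]
      calc ‖θ‖ ^ (2*γ) ≤ ‖θ‖ ^ (2:ℝ) := h2
        _ = ‖θ‖ ^ 2 := h3
        _ ≤ ‖θ‖ ^ α + ‖θ‖ ^ 2 := le_add_of_nonneg_left h4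
  have hmbound : ((m⁻¹ ^ N : ℝ)) ^ (2*γ)
      ≤ m ^ (-(N:ℝ) * (4 * s + (α - 2) * (d:ℝ)) / (2 * s - α + 2)) := by
    have hmN : (m⁻¹ ^ N : ℝ) = m ^ (-(N:ℝ)) := by
      rw [← Real.rpow_natCast m⁻¹ N, Real.inv_rpow hm0.le, ← Real.rpow_neg hm0.le]
    rw [hmN, ← Real.rpow_mul hm0.le]
    refine Real.rpow_le_rpow_of_exponent_le hm1.le ?_
    have hE : -(N:ℝ) * (4 * s + (α - 2) * (d:ℝ)) / (2 * s - α + 2) = -((N:ℝ) * β) := by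
      rw [hβdef]; ring
    rw [hE]
    have h1 : (N:ℝ) * β ≤ (N:ℝ) * (2*γ) := mul_le_mul_of_nonneg_left hβγ (Nat.cast_nonneg N)
    linarith
  have hCge : (2*π) ^ (-(d:ℝ)) * 4 * D ≤ (2*π) ^ (-(d:ℝ)) * 4 * D + 1 := by linarith
  have hE2 : (0:ℝ) ≤ m ^ (-((N:ℝ)*(d:ℝ))) := Real.rpow_nonneg hm0.le _
  have hE3 : (0:ℝ) ≤ (2*π) ^ (-(d:ℝ)) * A' := mul_nonneg (Real.rpow_nonneg hπ.le _) hA0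
  have hθγ0 : 0 ≤ ‖θ‖ ^ (2*γ) := Real.rpow_nonneg (norm_nonneg θ) _
  have hmγ0 : 0 ≤ ((m⁻¹ ^ N : ℝ)) ^ (2*γ) := Real.rpow_nonneg hminv _
  have hΘ0 : 0 ≤ ‖θ‖ ^ α + ‖θ‖ ^ 2 :=
    add_nonneg (Real.rpow_nonneg (norm_nonneg θ) α) (sq_nonneg _)
  have hC0 : (0:ℝ) ≤ (2*π) ^ (-(d:ℝ)) * 4 * D + 1 := by
    have h := mul_nonneg (mul_nonneg (Real.rpow_nonneg hπ.le (-(d:ℝ)))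
      (by norm_num : (0:ℝ) ≤ 4)) hD0
    linarith
  calc ‖coefD M m φth fh N k 0 - coefD M m φth fh N k θ‖ ^ 2
      ≤ (c * (K * (A' ^ (1/2:ℝ) * D ^ (1/2:ℝ))))^2 := pow_le_pow_left₀ (norm_nonneg _) hmain 2
    _ = c^2 * K^2 * (A' * D) := by
        have h1 := hsq2 A' hA0
        have h2 := hsq2 D hD0
        calc (c * (K * (A' ^ (1/2:ℝ) * D ^ (1/2:ℝ))))^2
            = c^2 * K^2 * ((A' ^ (1/2:ℝ))^2 * (D ^ (1/2:ℝ))^2) := by ring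
          _ = c^2 * K^2 * (A' * D) := by rw [h1, h2]
    _ = ((2*π) ^ (-(d:ℝ)) * 4 * D) * ((m ^ (-((N:ℝ)*(d:ℝ))) * ((2*π) ^ (-(d:ℝ)) * A')) *
          (B^2 * (‖θ‖ ^ (2*γ) * ((m⁻¹ ^ N : ℝ)) ^ (2*γ)))) := by
        rw [hc2, hK2]; ring
    _ ≤ ((2*π) ^ (-(d:ℝ)) * 4 * D + 1) * ((m ^ (-((N:ℝ)*(d:ℝ))) * ((2*π) ^ (-(d:ℝ)) * A')) *
          (B^2 * ((‖θ‖ ^ α + ‖θ‖ ^ 2) *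
            m ^ (-(N:ℝ) * (4 * s + (α - 2) * (d:ℝ)) / (2 * s - α + 2))))) := by
        refine mul_le_mul hCge ?_ ?_ hC0
        · refine mul_le_mul_of_nonneg_left ?_ (mul_nonneg hE2 hE3)
          refine mul_le_mul_of_nonneg_left ?_ (sq_nonneg B)
          exact mul_le_mul hθbound hmbound hmγ0 hΘ0
        · exact mul_nonneg (mul_nonneg hE2 hE3)
            (mul_nonneg (sq_nonneg B) (mul_nonneg hθγ0 hmγ0))
    _ = _ := by rw [hsob]; ring


end
end

section
/- Let d ≥ 1, s > 0, t ≥ 0, κ ∈ ℕ₀ with s < κ+1, ν ∈ (0,1), and let M be a d×d integer matrix with m := |det M|^{1/d} > 1 satisfying ‖(M^T)^{-1}x‖₂ = m^{-1}‖x‖₂ for all x ∈ ℝ^d. Let b̂ : ℝ^d → ℂ be measurable with |b̂(ξ)| ≤ C₀‖ξ‖₂^{κ+1} for all ξ ∈ ℝ^d, where C₀ > 0. Then for every f ∈ H^s(ℝ^d) and every N ∈ ℕ₀: ∫_{‖ξ‖₂ < m^{Nν}} |f̂(ξ)|² ∑_{j=N}^∞ m^{2js} |b̂((M^T)^{-j-1}ξ)|²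 (1+‖(M^T)^{-j-1}ξ‖₂²)^t dξ ≤ 2^t (2π)^d C₀² m^{-2(κ+1)} (1−m^{-2(κ+1−s)})^{-1} m^{-2N[(κ+1)(1−ν)−s]} ‖f‖²_{H^s}. -/
open MeasureTheory Real Filter Matrix
open scoped BigOperators

noncomputable section

/-- Estimate of the low-frequency tail integral `I_{N,1}`. -/
theorem low_frequency_tail_estimate
    (d : ℕ) (hd : 1 ≤ d) (s t : ℝ) (hs : 0 < s) (ht : 0 ≤ t)
    (κ : ℕ) (hsκ : s < (κ : ℝ) + 1) (ν : ℝ) (hν0 : 0 < ν) (hν1 : ν < 1)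
    (M : Matrix (Fin d) (Fin d) ℤ) (m : ℝ)
    (hm : m = |(toR M).det| ^ ((1 : ℝ) / d)) (hm1 : 1 < m)
    (hM : ∀ x : Rd d, ‖mvec (((toR M)ᵀ)⁻¹) x‖ = m⁻¹ * ‖x‖)
    (b : Rd d → ℂ) (hbm : Measurable b)
    (C₀ : ℝ) (hC₀ : 0 < C₀) (hb : ∀ ξ : Rd d, ‖b ξ‖ ≤ C₀ * ‖ξ‖ ^ ((κ : ℝ) + 1))
    (fh : Rd d → ℂ) (hf : MemSob s fh) (N : ℕ) :
    (∫ ξ in {ξ : Rd d | ‖ξ‖ < m ^ ((N : ℝ) * ν)},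
        ‖fh ξ‖ ^ 2 * ∑' j : ℕ,
          m ^ (2 * ((N + j : ℕ) : ℝ) * s) *
            ‖b (mvec ((((toR M)ᵀ)⁻¹) ^ (N + j + 1)) ξ)‖ ^ 2 *
              (1 + ‖mvec ((((toR M)ᵀ)⁻¹) ^ (N + j + 1)) ξ‖ ^ 2) ^ t) ≤
      2 ^ t * (2 * π) ^ (d : ℝ) * C₀ ^ 2 * m ^ (-(2 * ((κ : ℝ) + 1))) *
        (1 - m ^ (-(2 * ((κ : ℝ) + 1 - s))))⁻¹ *
          m ^ (-(2 * (N : ℝ) * (((κ : ℝ) + 1) * (1 - ν) - s))) * sobSq s fh := by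
  have hm0 : (0:ℝ) < m := lt_trans one_pos hm1
  have h2pi : (0:ℝ) < 2 * π := by positivity
  set A : Matrix (Fin d) (Fin d) ℝ := ((toR M)ᵀ)⁻¹ with hAdef
  -- norm of iterated action
  have hpow : ∀ (n : ℕ) (x : Rd d), ‖mvec (A ^ n) x‖ = m ^ (-(n:ℝ)) * ‖x‖ := by
    intro n
    induction n with
    | zero =>
      intro x
      have hx : mvec (A ^ 0) x = x := by
        ext i
        simp [mvec, Matrix.one_mulVec]
      rw [hx]
      simp
    | succ n ih =>
      intro x
      have h1 : mvec (A ^ (n+1)) x = mvec A (mvec (A ^ n) x) := by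
        ext i
        simp [mvec, Matrix.mulVec_mulVec, pow_succ']
      rw [h1, hM, ih]
      have h2 : m ^ (-(((n+1:ℕ)):ℝ)) = m⁻¹ * m ^ (-(n:ℝ)) := by
        rw [show (-(((n+1:ℕ)):ℝ)) = (-1) + (-(n:ℝ)) by push_cast; ring,
          Real.rpow_add hm0, Real.rpow_neg_one]
      rw [h2]
      ring
  have hmm : ∀ X Y : ℝ, m ^ X * m ^ Y = m ^ (X + Y) := fun X Y => (Real.rpow_add hm0 X Y).symm
  set r : ℝ := m ^ (-(2 * ((κ:ℝ) + 1 - s))) with hrdef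
  have hr0 : (0:ℝ) ≤ r := (Real.rpow_pos_of_pos hm0 _).le
  have hr1 : r < 1 := Real.rpow_lt_one_of_one_lt_of_neg hm1 (by nlinarith)
  set c : ℝ := 2 ^ t * C₀ ^ 2 * m ^ (-(2 * ((κ:ℝ) + 1))) *
    m ^ (-(2 * (N:ℝ) * (((κ:ℝ) + 1) * (1 - ν) - s))) with hcdef
  have hc0 : (0:ℝ) ≤ c := by positivity
  set K : ℝ := c * (1 - r)⁻¹ with hKdef
  have hK0 : (0:ℝ) ≤ K := mul_nonneg hc0 (inv_nonneg.mpr (by linarith))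
  -- pointwise bound on the tsum
  have key : ∀ ξ : Rd d, ‖ξ‖ < m ^ ((N:ℝ) * ν) →
      (∑' j : ℕ, m ^ (2 * ((N + j : ℕ) : ℝ) * s) *
        ‖b (mvec (A ^ (N + j + 1)) ξ)‖ ^ 2 *
        (1 + ‖mvec (A ^ (N + j + 1)) ξ‖ ^ 2) ^ t) ≤ K := by
    intro ξ hξ
    have hterm : ∀ j : ℕ, m ^ (2 * ((N + j : ℕ) : ℝ) * s) *
        ‖b (mvec (A ^ (N + j + 1)) ξ)‖ ^ 2 *
        (1 + ‖mvec (A ^ (N + j + 1)) ξ‖ ^ 2) ^ t ≤ c * r ^ j := by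
      intro j
      set η : Rd d := mvec (A ^ (N + j + 1)) ξ with hηdef
      set e : ℝ := (N:ℝ) * ν - ((N:ℝ) + (j:ℝ) + 1) with hedef
      have hne : ‖η‖ ≤ m ^ e := by
        rw [hηdef, hpow]
        have h1 : m ^ (-(((N + j + 1 : ℕ)):ℝ)) * ‖ξ‖ ≤
            m ^ (-(((N + j + 1 : ℕ)):ℝ)) * m ^ ((N:ℝ) * ν) :=
          mul_le_mul_of_nonneg_left hξ.le (Real.rpow_pos_of_pos hm0 _).le
        refine h1.trans_eq ?_
        rw [hmm, hedef]
        congr 1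
        push_cast
        ring
      have he0 : e ≤ 0 := by
        have : (N:ℝ) * ν ≤ (N:ℝ) := by
          nlinarith [(Nat.cast_nonneg N : (0:ℝ) ≤ N)]
        have hj : (0:ℝ) ≤ (j:ℝ) := Nat.cast_nonneg j
        rw [hedef]; linarith
      have hle1 : m ^ e ≤ 1 := Real.rpow_le_one_of_one_le_of_nonpos hm1.le he0
      have hη1 : ‖η‖ ≤ 1 := hne.trans hle1
      have wt : (1 + ‖η‖ ^ 2) ^ t ≤ 2 ^ t := by
        apply Real.rpow_le_rpow (by positivity) ?_ ht
        nlinarith [norm_nonneg η]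
      have hb1 : ‖b η‖ ≤ C₀ * (m ^ e) ^ ((κ:ℝ) + 1) := by
        refine (hb η).trans ?_
        exact mul_le_mul_of_nonneg_left
          (Real.rpow_le_rpow (norm_nonneg η) hne (by positivity)) hC₀.le
      have hb2 : ‖b η‖ ^ 2 ≤ C₀ ^ 2 * m ^ (e * (2 * ((κ:ℝ) + 1))) := by
        have h1 : ‖b η‖ ^ 2 ≤ (C₀ * (m ^ e) ^ ((κ:ℝ) + 1)) ^ 2 :=
          pow_le_pow_left₀ (norm_nonneg _) hb1 2
        refine h1.trans_eq ?_
        rw [mul_pow, ← Real.rpow_mul hm0.le,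
          ← Real.rpow_natCast (m ^ (e * ((κ:ℝ) + 1))) 2, ← Real.rpow_mul hm0.le]
        congr 1
        push_cast
        ring
      have tnn : (0:ℝ) ≤ (1 + ‖η‖ ^ 2) ^ t := by positivity
      calc m ^ (2 * ((N + j : ℕ) : ℝ) * s) * ‖b η‖ ^ 2 * (1 + ‖η‖ ^ 2) ^ t
          ≤ m ^ (2 * ((N + j : ℕ) : ℝ) * s) * (C₀ ^ 2 * m ^ (e * (2 * ((κ:ℝ) + 1)))) * 2 ^ t := by
            apply mul_le_mul _ wt tnn (by positivity)
            exact mul_le_mul_of_nonneg_left hb2 (Real.rpow_pos_of_pos hm0 _).le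
        _ = 2 ^ t * C₀ ^ 2 * (m ^ (2 * ((N + j : ℕ) : ℝ) * s) * m ^ (e * (2 * ((κ:ℝ) + 1)))) := by
            ring
        _ = 2 ^ t * C₀ ^ 2 * m ^ (2 * ((N + j : ℕ) : ℝ) * s + e * (2 * ((κ:ℝ) + 1))) := by
            rw [hmm]
        _ = c * r ^ j := by
            rw [hcdef, hrdef, ← Real.rpow_natCast (m ^ (-(2 * ((κ:ℝ) + 1 - s)))) j,
              ← Real.rpow_mul hm0.le,
              mul_assoc (2 ^ t * C₀ ^ 2), hmm, mul_assoc (2 ^ t * C₀ ^ 2), hmm]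
            congr 1
            rw [hedef]
            push_cast
            ring
    have hgeo : Summable (fun j : ℕ => c * r ^ j) :=
      (summable_geometric_of_lt_one hr0 hr1).mul_left c
    have hnn : ∀ j : ℕ, (0:ℝ) ≤ m ^ (2 * ((N + j : ℕ) : ℝ) * s) *
        ‖b (mvec (A ^ (N + j + 1)) ξ)‖ ^ 2 *
        (1 + ‖mvec (A ^ (N + j + 1)) ξ‖ ^ 2) ^ t := fun j => by positivity
    have hsummable : Summable (fun j : ℕ => m ^ (2 * ((N + j : ℕ) : ℝ) * s) *
        ‖b (mvec (A ^ (N + j + 1)) ξ)‖ ^ 2 *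
        (1 + ‖mvec (A ^ (N + j + 1)) ξ‖ ^ 2) ^ t) :=
      Summable.of_nonneg_of_le hnn hterm hgeo
    calc (∑' j : ℕ, m ^ (2 * ((N + j : ℕ) : ℝ) * s) *
        ‖b (mvec (A ^ (N + j + 1)) ξ)‖ ^ 2 *
        (1 + ‖mvec (A ^ (N + j + 1)) ξ‖ ^ 2) ^ t)
        ≤ ∑' j : ℕ, c * r ^ j := Summable.tsum_le_tsum hterm hsummable hgeo
      _ = c * (1 - r)⁻¹ := by rw [tsum_mul_left, tsum_geometric_of_lt_one hr0 hr1]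
      _ = K := hKdef.symm
  -- integral estimate
  have hfint : Integrable (fun ξ : Rd d => ‖fh ξ‖ ^ 2 * (1 + ‖ξ‖ ^ 2) ^ s) := hf
  have hgint : Integrable (fun ξ : Rd d => K * (‖fh ξ‖ ^ 2 * (1 + ‖ξ‖ ^ 2) ^ s)) :=
    hfint.const_mul K
  have hmeas : MeasurableSet {ξ : Rd d | ‖ξ‖ < m ^ ((N:ℝ) * ν)} :=
    measurableSet_lt measurable_norm measurable_const
  have step1 : (∫ ξ in {ξ : Rd d | ‖ξ‖ < m ^ ((N : ℝ) * ν)},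
        ‖fh ξ‖ ^ 2 * ∑' j : ℕ,
          m ^ (2 * ((N + j : ℕ) : ℝ) * s) *
            ‖b (mvec (A ^ (N + j + 1)) ξ)‖ ^ 2 *
              (1 + ‖mvec (A ^ (N + j + 1)) ξ‖ ^ 2) ^ t) ≤
      ∫ ξ in {ξ : Rd d | ‖ξ‖ < m ^ ((N : ℝ) * ν)},
        K * (‖fh ξ‖ ^ 2 * (1 + ‖ξ‖ ^ 2) ^ s) := by
    apply integral_mono_of_nonneg
    · refine ae_of_all _ fun ξ => ?_
      exact mul_nonneg (by positivity) (tsum_nonneg fun j => by positivity)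
    · exact hgint.restrict
    · refine (ae_restrict_iff' hmeas).mpr (ae_of_all _ fun ξ hξ => ?_)
      have h1 := key ξ hξ
      have h2 : (1:ℝ) ≤ (1 + ‖ξ‖ ^ 2) ^ s :=
        Real.one_le_rpow (by nlinarith [sq_nonneg ‖ξ‖]) hs.le
      have h3 : ‖fh ξ‖ ^ 2 * (∑' j : ℕ,
          m ^ (2 * ((N + j : ℕ) : ℝ) * s) *
            ‖b (mvec (A ^ (N + j + 1)) ξ)‖ ^ 2 *
              (1 + ‖mvec (A ^ (N + j + 1)) ξ‖ ^ 2) ^ t) ≤ ‖fh ξ‖ ^ 2 * K :=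
        mul_le_mul_of_nonneg_left h1 (by positivity)
      refine h3.trans ?_
      have h4 : K * (‖fh ξ‖ ^ 2 * 1) ≤ K * (‖fh ξ‖ ^ 2 * (1 + ‖ξ‖ ^ 2) ^ s) :=
        mul_le_mul_of_nonneg_left
          (mul_le_mul_of_nonneg_left h2 (sq_nonneg _)) hK0
      calc ‖fh ξ‖ ^ 2 * K = K * (‖fh ξ‖ ^ 2 * 1) := by ring
        _ ≤ _ := h4
  have step2 : (∫ ξ in {ξ : Rd d | ‖ξ‖ < m ^ ((N : ℝ) * ν)},
        K * (‖fh ξ‖ ^ 2 * (1 + ‖ξ‖ ^ 2) ^ s)) ≤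
      ∫ ξ : Rd d, K * (‖fh ξ‖ ^ 2 * (1 + ‖ξ‖ ^ 2) ^ s) := by
    apply setIntegral_le_integral hgint
    exact ae_of_all _ fun ξ => mul_nonneg hK0 (by positivity)
  have step3 : (∫ ξ : Rd d, K * (‖fh ξ‖ ^ 2 * (1 + ‖ξ‖ ^ 2) ^ s)) =
      K * ((2 * π) ^ (d:ℝ) * sobSq s fh) := by
    rw [integral_const_mul]
    congr 1
    rw [sobSq]
    rw [← mul_assoc, ← Real.rpow_add h2pi]
    simp
  have hfinal : K * ((2 * π) ^ (d:ℝ) * sobSq s fh) =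
      2 ^ t * (2 * π) ^ (d : ℝ) * C₀ ^ 2 * m ^ (-(2 * ((κ : ℝ) + 1))) *
        (1 - m ^ (-(2 * ((κ : ℝ) + 1 - s))))⁻¹ *
          m ^ (-(2 * (N : ℝ) * (((κ : ℝ) + 1) * (1 - ν) - s))) * sobSq s fh := by
    rw [hKdef, hcdef, hrdef]
    ring
  calc _ ≤ _ := step1
    _ ≤ _ := step2
    _ = _ := step3.trans hfinal


end
end
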